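/- arXiv:1701.00269 — 9 statements merged into one kernel-verified Lean document; each statement's English description precedes it below -/
import Mathlib

section
/- For all integers r > 3 and k ≥ 3 there exists a constant C = C(r,k) > 0 such that for all integers n ≥ 2 and s ≥ 1, the number f_r(n,k,s) of edge-colored balanced complete (r−1)-partite (r−1)-graphs K_{s:r−1} with vertex set contained in [n] whose extension is C_k-free is at most 2^{C·(s^{r−2}·log n + s^{r−1}·(1 + log s))}. -/
/-- A hypergraph `H` contains a loose `k`-cycle. -/
def HasLooseCycle (k : ℕ) (H : Finset (Finset ℕ)) : Prop :=
  ∃ (e : ZMod k → Finset ℕ) (v : ZMod k → ℕ),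
    Function.Injective e ∧ Function.Injective v ∧
    (∀ i, e i ∈ H) ∧
    (∀ i, e i ∩ e (i + 1) = ({v i} : Finset ℕ)) ∧
    (∀ i j, j ≠ i → j ≠ i + 1 → i ≠ j + 1 → e i ∩ e j = ∅)

/-- The edge set of the complete `m`-partite `m`-graph with parts `P 0, …, P (m-1)`:
all `m`-element subsets of the union of the parts meeting each part in exactly one
vertex. -/
def completeMultipartiteEdges (m : ℕ) (P : Fin m → Finset ℕ) : Finset (Finset ℕ) :=
  ((Finset.univ.biUnion P).powersetCard m).filter fun T => ∀ i, (T ∩ P i).card = 1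

/-- The extension of an edge-colored hypergraph: each edge `e` becomes `e ∪ {χ e}`. -/
def Extension (G : Finset (Finset ℕ)) (χ : Finset ℕ → ℕ) : Finset (Finset ℕ) :=
  G.image fun e => insert (χ e) e


/-!
Write `m = r - 1` and let `V` be the union of the parts. A colouring is determined by the parts
(at most `n ^ (s m)` choices), the set `Z` of colours outside `V`, and the colour of each of the
`s ^ m` edges inside `V ∪ Z`. The point is that `|Z| = O(s ^ (m - 1))`: keeping one edge per outer
colour gives a subgraph of `K_{s:m}` on which the extension adds distinct new vertices, so a loose
cycle of the subgraph lifts to the extension, and a `C_k`-free subgraph of `K_{s:m}` has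
`O(s ^ (m - 1))` edges. For the latter, delete all edges through a pair of small codegree, as long
as there is one; this costs `O(s ^ (m - 3))` edges for each of the `(m s) ^ 2` pairs. If an edge
survives, every covered pair has codegree far above the triple codegree `s ^ (m - 3)`, so edges
can be chosen greedily avoiding all previously used vertices, first along a fan to find a closed
walk of `k` vertices and then along this walk to build a loose `k`-cycle.
-/

open Finset

def edgesContaining (H : Finset (Finset ℕ)) (T : Finset ℕ) : Finset (Finset ℕ) :=
  H.filter (T ⊆ ·)

lemma mem_edgesContaining {H : Finset (Finset ℕ)} {T e : Finset ℕ} :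
    e ∈ edgesContaining H T ↔ e ∈ H ∧ T ⊆ e :=
  mem_filter

lemma edgesContaining_mono {H H' : Finset (Finset ℕ)} (h : H ⊆ H') (T : Finset ℕ) :
    edgesContaining H T ⊆ edgesContaining H' T :=
  filter_subset_filter _ h

section CompleteMultipartite

variable {m s : ℕ} {P : Fin m → Finset ℕ} {e : Finset ℕ}

lemma mem_completeMultipartiteEdges :
    e ∈ completeMultipartiteEdges m P ↔
      e ⊆ univ.biUnion P ∧ #e = m ∧ ∀ i, #(e ∩ P i) = 1 := by
  simp only [completeMultipartiteEdges, mem_filter, mem_powersetCard, and_assoc]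

def partVertex (P : Fin m → Finset ℕ) (e : Finset ℕ) (i : Fin m) : ℕ :=
  if h : (e ∩ P i).Nonempty then (e ∩ P i).min' h else 0

lemma inter_eq_singleton_partVertex (he : e ∈ completeMultipartiteEdges m P) (i : Fin m) :
    e ∩ P i = {partVertex P e i} := by
  obtain ⟨x, hx⟩ := card_eq_one.1 ((mem_completeMultipartiteEdges.1 he).2.2 i)
  have hne : (e ∩ P i).Nonempty := by simp [hx]
  rw [partVertex, dif_pos hne]
  simp_rw [hx, min'_singleton]

lemma partVertex_mem_inter (he : e ∈ completeMultipartiteEdges m P) (i : Fin m) :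
    partVertex P e i ∈ e ∩ P i := by
  rw [inter_eq_singleton_partVertex he]
  exact mem_singleton_self _

lemma partVertex_eq_of_mem (he : e ∈ completeMultipartiteEdges m P) {i : Fin m} {x : ℕ}
    (hx : x ∈ e) (hxi : x ∈ P i) : partVertex P e i = x := by
  have := inter_eq_singleton_partVertex he i ▸ mem_inter.2 ⟨hx, hxi⟩
  exact (mem_singleton.1 this).symm

lemma image_partVertex (he : e ∈ completeMultipartiteEdges m P) :
    univ.image (partVertex P e) = e := by
  ext x
  simp only [mem_image, mem_univ, true_and]
  constructor
  · rintro ⟨i, rfl⟩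
    exact (mem_inter.1 (partVertex_mem_inter he i)).1
  · intro hx
    obtain ⟨i, -, hi⟩ := mem_biUnion.1 ((mem_completeMultipartiteEdges.1 he).1 hx)
    exact ⟨i, partVertex_eq_of_mem he hx hi⟩

lemma partVertex_injective (he : e ∈ completeMultipartiteEdges m P) :
    Function.Injective (partVertex P e) := by
  have hcard : #(univ.image (partVertex P e)) = #(univ : Finset (Fin m)) := by
    rw [image_partVertex he, card_univ, Fintype.card_fin]
    exact (mem_completeMultipartiteEdges.1 he).2.1
  exact Set.injOn_univ.1 (by simpa using card_image_iff.1 hcard)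

/-- An edge containing `T` is determined by its vertices in the parts that `T` does not meet. -/
theorem card_edgesContaining_completeMultipartiteEdges_le (hcard : ∀ i, #(P i) = s)
    (T : Finset ℕ) : #(edgesContaining (completeMultipartiteEdges m P) T) ≤ s ^ (m - #T) := by
  obtain hempty | ⟨e₀, he₀⟩ :=
    (edgesContaining (completeMultipartiteEdges m P) T).eq_empty_or_nonempty
  · simp [hempty]
  obtain ⟨he₀K, hTe₀⟩ := mem_edgesContaining.1 he₀
  set I := univ.filter fun i => partVertex P e₀ i ∈ T
  have hI : #I = #T := by
    rw [← card_image_of_injective I (partVertex_injective he₀K)]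
    congr 1
    ext x
    simp only [I, mem_image, mem_filter, mem_univ, true_and]
    refine ⟨fun ⟨i, hi, hix⟩ => hix ▸ hi, fun hx => ?_⟩
    obtain ⟨i, -, hi⟩ := mem_image.1 ((image_partVertex he₀K).symm ▸ hTe₀ hx)
    exact ⟨i, hi ▸ hx, hi⟩
  let t : Fin m → Finset ℕ := fun i => if i ∈ I then {partVertex P e₀ i} else P i
  calc #(edgesContaining (completeMultipartiteEdges m P) T)
      ≤ #(Fintype.piFinset t) := by
        refine card_le_card_of_injOn (partVertex P) (fun e he => ?_) (fun e he e' he' h => ?_)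
        · obtain ⟨heK, hTe⟩ := mem_edgesContaining.1 he
          refine Fintype.mem_piFinset.2 fun i => ?_
          by_cases hi : i ∈ I
          · have hiT := (mem_filter.1 hi).2
            have hiP := (mem_inter.1 (partVertex_mem_inter he₀K i)).2
            simp [t, hi, partVertex_eq_of_mem heK (hTe hiT) hiP]
          · simpa [t, hi] using (mem_inter.1 (partVertex_mem_inter heK i)).2
        · rw [← image_partVertex (mem_edgesContaining.1 he).1,
            ← image_partVertex (mem_edgesContaining.1 he').1]
          exact congrArg (univ.image ·) h
    _ = s ^ (m - #T) := by
        rw [Fintype.card_piFinset, ← hI]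
        simp only [t, apply_ite card, card_singleton, hcard, prod_ite, prod_const_one, one_mul,
          prod_const]
        congr 1
        rw [filter_not, card_sdiff_of_subset (filter_subset _ _), filter_mem_eq_inter,
          univ_inter, card_univ, Fintype.card_fin]

lemma card_biUnion_parts_le (hcard : ∀ i, #(P i) = s) : #(univ.biUnion P) ≤ m * s := by
  simpa using card_biUnion_le_card_mul univ P s fun i _ => (hcard i).le

end CompleteMultipartite

section Codegree

variable {H : Finset (Finset ℕ)}

def coveredPairs (H : Finset (Finset ℕ)) : Finset (ℕ × ℕ) :=
  H.biUnion offDiag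

lemma mem_coveredPairs {u v : ℕ} :
    (u, v) ∈ coveredPairs H ↔ u ≠ v ∧ (edgesContaining H {u, v}).Nonempty := by
  simp only [coveredPairs, mem_biUnion, mem_offDiag, Finset.Nonempty, mem_edgesContaining,
    insert_subset_iff, singleton_subset_iff]
  aesop

lemma mk_mem_coveredPairs {e : Finset ℕ} (he : e ∈ H) {u v : ℕ} (hu : u ∈ e) (hv : v ∈ e)
    (huv : u ≠ v) : (u, v) ∈ coveredPairs H :=
  mem_biUnion.2 ⟨e, he, mem_offDiag.2 ⟨hu, hv, huv⟩⟩

lemma swap_mem_coveredPairs {u v : ℕ} (h : (u, v) ∈ coveredPairs H) : (v, u) ∈ coveredPairs H := by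
  obtain ⟨e, he, hp⟩ := mem_biUnion.1 h
  obtain ⟨hu, hv, huv⟩ := mem_offDiag.1 hp
  exact mk_mem_coveredPairs he hv hu huv.symm

lemma coveredPairs_mono {H' : Finset (Finset ℕ)} (h : H ⊆ H') :
    coveredPairs H ⊆ coveredPairs H' :=
  biUnion_subset_biUnion_of_subset_left _ h

lemma card_coveredPairs_le {V : Finset ℕ} (hV : ∀ e ∈ H, e ⊆ V) :
    #(coveredPairs H) ≤ #V ^ 2 := by
  calc #(coveredPairs H) ≤ #(V ×ˢ V) := card_le_card fun p hp => by
        obtain ⟨e, he, hp⟩ := mem_biUnion.1 hp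
        obtain ⟨h1, h2, -⟩ := mem_offDiag.1 hp
        exact mem_product.2 ⟨hV e he h1, hV e he h2⟩
    _ = #V ^ 2 := by rw [card_product, sq]

def IsCodegreeRich (ρ : ℕ) (H : Finset (Finset ℕ)) : Prop :=
  ∀ p ∈ coveredPairs H, ρ < #(edgesContaining H {p.1, p.2})

lemma IsCodegreeRich.lt_card {ρ : ℕ} (h : IsCodegreeRich ρ H) {u v : ℕ}
    (huv : (u, v) ∈ coveredPairs H) : ρ < #(edgesContaining H {u, v}) :=
  h (u, v) huv

/-- Repeatedly deleting all edges through a covered pair of codegree at most `ρ` costs at most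
`ρ` edges per covered pair. -/
theorem exists_isCodegreeRich_subset (ρ : ℕ) (H : Finset (Finset ℕ)) :
    ∃ H' ⊆ H, #H ≤ #H' + #(coveredPairs H) * ρ ∧ IsCodegreeRich ρ H' := by
  induction H using Finset.strongInduction with
  | H H ih =>
  by_cases hrich : IsCodegreeRich ρ H
  · exact ⟨H, Subset.rfl, by omega, hrich⟩
  obtain ⟨⟨u, v⟩, huv, hpoor⟩ : ∃ p ∈ coveredPairs H, #(edgesContaining H {p.1, p.2}) ≤ ρ := by
    simpa [IsCodegreeRich] using hrich
  set E := edgesContaining H {u, v}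
  have hEH : E ⊆ H := filter_subset _ _
  obtain ⟨H', hH', hcard, hrich'⟩ := ih (H \ E) (sdiff_ssubset hEH (mem_coveredPairs.1 huv).2)
  have hpairs : #(coveredPairs (H \ E)) < #(coveredPairs H) := by
    refine card_lt_card (ssubset_iff_of_subset (coveredPairs_mono sdiff_subset) |>.2
      ⟨(u, v), huv, fun h => ?_⟩)
    obtain ⟨e, he⟩ := (mem_coveredPairs.1 h).2
    obtain ⟨heHE, huve⟩ := mem_edgesContaining.1 he
    exact (mem_sdiff.1 heHE).2 (mem_edgesContaining.2 ⟨(mem_sdiff.1 heHE).1, huve⟩)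
  refine ⟨H', hH'.trans sdiff_subset, ?_, hrich'⟩
  have := card_sdiff_add_card_eq_card hEH
  nlinarith

variable {D : ℕ}

lemma exists_mem_edgesContaining_disjoint
    (htriple : ∀ T : Finset ℕ, #T = 3 → #(edgesContaining H T) ≤ D)
    {u v : ℕ} (huv : u ≠ v) {Φ : Finset ℕ} (hu : u ∉ Φ) (hv : v ∉ Φ)
    (hΦ : #Φ * D < #(edgesContaining H {u, v})) :
    ∃ e ∈ edgesContaining H {u, v}, Disjoint e Φ := by
  by_contra! hmeet
  have hsub : edgesContaining H {u, v} ⊆ Φ.biUnion fun w => edgesContaining H {u, v, w} := by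
    intro e he
    obtain ⟨w, hwe, hwΦ⟩ := not_disjoint_iff.1 (hmeet e he)
    obtain ⟨heH, huve⟩ := mem_edgesContaining.1 he
    refine mem_biUnion.2 ⟨w, hwΦ, mem_edgesContaining.2 ⟨heH, ?_⟩⟩
    simp only [insert_subset_iff, singleton_subset_iff] at huve ⊢
    exact ⟨huve.1, huve.2, hwe⟩
  have := card_biUnion_le_card_mul Φ (fun w => edgesContaining H {u, v, w}) D fun w hw =>
    htriple _ (card_eq_three.2 ⟨u, v, w, huv, fun h => hu (h ▸ hw), fun h => hv (h ▸ hw), rfl⟩)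
  exact absurd ((card_le_card hsub).trans this) (by omega)

end Codegree

section LooseCycle

variable {H : Finset (Finset ℕ)} {k : ℕ}

lemma HasLooseCycle.mono {H' : Finset (Finset ℕ)} (h : HasLooseCycle k H) (hH : H ⊆ H') :
    HasLooseCycle k H' := by
  obtain ⟨e, v, he, hv, hmem, hcons, hdisj⟩ := h
  exact ⟨e, v, he, hv, fun i => hH (hmem i), hcons, hdisj⟩

lemma hasLooseCycle_of_inter_subset (hk : 3 ≤ k) {u : ZMod k → ℕ} (hu : Function.Injective u)
    {e : ZMod k → Finset ℕ} (heH : ∀ i, e i ∈ H) (hue : ∀ i, u i ∈ e i ∧ u (i + 1) ∈ e i)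
    (hcard : ∀ i, 3 ≤ #(e i))
    (hinter : ∀ i j, i ≠ j → e i ∩ e j ⊆ {u i, u (i + 1)} ∩ {u j, u (j + 1)}) :
    HasLooseCycle k H := by
  have hsucc : ∀ i : ZMod k, i + 1 ≠ i := fun i h => by
    have : Nontrivial (ZMod k) := ZMod.nontrivial_iff.2 (by omega)
    exact one_ne_zero (add_eq_left.1 h)
  have hsucc₂ : ∀ i : ZMod k, i + 1 + 1 ≠ i := fun i h => by
    have : ((2 : ℕ) : ZMod k) = 0 := by push_cast; linear_combination h
    have := Nat.le_of_dvd two_pos ((ZMod.natCast_eq_zero_iff 2 k).1 this)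
    omega
  refine ⟨e, fun i => u (i + 1), fun i j hij => ?_, fun i j h => add_right_cancel (hu h), heH,
    fun i => ?_, fun i j hji hji₁ hij₁ => ?_⟩
  · by_contra hne
    have hsub : e i ⊆ {u i, u (i + 1)} := by
      simpa [hij] using (hinter i j hne).trans inter_subset_left
    have := (card_le_card hsub).trans card_le_two
    have := hcard i
    omega
  · refine Subset.antisymm (fun x hx => ?_) (singleton_subset_iff.2 ?_)
    · have := hinter i (i + 1) (hsucc i).symm hx
      simp only [mem_inter, mem_insert, mem_singleton] at this ⊢
      rcases this with ⟨rfl | rfl, h | h⟩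
      · exact absurd (hu h) (hsucc i).symm
      · exact absurd (hu h) (hsucc₂ i).symm
      · rfl
      · rfl
    · exact mem_inter.2 ⟨(hue i).2, (hue (i + 1)).1⟩
  · refine eq_empty_of_forall_notMem fun x hx => ?_
    have := hinter i j (Ne.symm hji) hx
    simp only [mem_inter, mem_insert, mem_singleton] at this
    rcases this with ⟨rfl | rfl, h | h⟩
    · exact hji (hu h).symm
    · exact hij₁ (hu h)
    · exact hji₁ (hu h).symm
    · exact hji (add_right_cancel (hu h)).symm

lemma HasLooseCycle.of_inter_eq (hk : k ≠ 1) {R : Finset (Finset ℕ)}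
    (f : Finset ℕ → Finset ℕ) (hf : ∀ e ∈ R, f e ∈ H) (hinj : Set.InjOn f R)
    (hinter : ∀ e ∈ R, ∀ e' ∈ R, e ≠ e' → f e ∩ f e' = e ∩ e') (h : HasLooseCycle k R) :
    HasLooseCycle k H := by
  obtain ⟨e, v, he, hv, hmem, hcons, hdisj⟩ := h
  have : Nontrivial (ZMod k) := ZMod.nontrivial_iff.2 hk
  refine ⟨f ∘ e, v, fun i j h => he (hinj (hmem i) (hmem j) h), hv, fun i => hf _ (hmem i),
    fun i => ?_, fun i j hji hji₁ hij₁ => ?_⟩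
  · rw [Function.comp_apply, Function.comp_apply, hinter _ (hmem i) _ (hmem (i + 1))
      (he.ne (by simp)), hcons]
  · rw [Function.comp_apply, Function.comp_apply, hinter _ (hmem i) _ (hmem j)
      (he.ne (Ne.symm hji)), hdisj i j hji hji₁ hij₁]

end LooseCycle

section RichHypergraph

variable {H : Finset (Finset ℕ)} {D ρ k : ℕ}

/-- An edge through `u 0` and `u (j - 1)` avoiding `u 1, …, u (j - 2)` has a third vertex,
which is new. -/
lemma exists_new_vertex_coveredPairs (hbig : ∀ e ∈ H, 3 ≤ #e)
    (htriple : ∀ T : Finset ℕ, #T = 3 → #(edgesContaining H T) ≤ D)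
    (hrich : IsCodegreeRich ρ H) (hρ : k * D ≤ ρ) {j : ℕ} (hj : 2 ≤ j) (hjk : j ≤ k)
    {u : ℕ → ℕ} (hinj : ∀ a < j, ∀ b < j, u a = u b → a = b)
    (hlast : (u 0, u (j - 1)) ∈ coveredPairs H) :
    ∃ w, (∀ a < j, u a ≠ w) ∧ (u (j - 1), w) ∈ coveredPairs H ∧ (u 0, w) ∈ coveredPairs H := by
  have hnotMem : ∀ c, (c = 0 ∨ c = j - 1) → u c ∉ (Ico 1 (j - 1)).image u := by
    intro c hc hmem
    obtain ⟨a, ha, hac⟩ := mem_image.1 hmem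
    have := hinj a (by simp at ha; omega) c (by omega) hac
    simp at ha
    omega
  have hΦ : #((Ico 1 (j - 1)).image u) * D < #(edgesContaining H {u 0, u (j - 1)}) := by
    have : #((Ico 1 (j - 1)).image u) ≤ k := by
      refine card_image_le.trans ?_
      rw [Nat.card_Ico]
      omega
    exact lt_of_le_of_lt ((Nat.mul_le_mul_right D this).trans hρ) (hrich.lt_card hlast)
  obtain ⟨g, hg, hgΦ⟩ := exists_mem_edgesContaining_disjoint htriple
    (mem_coveredPairs.1 hlast).1 (hnotMem 0 (.inl rfl)) (hnotMem (j - 1) (.inr rfl)) hΦ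
  obtain ⟨hgH, hg₀, hgj⟩ : g ∈ H ∧ u 0 ∈ g ∧ u (j - 1) ∈ g := by
    simpa [mem_edgesContaining, insert_subset_iff] using hg
  obtain ⟨w, hwg, hwu⟩ : ∃ w ∈ g, ∀ a < j, u a ≠ w := by
    by_contra! hall
    have hsub : g ⊆ {u 0, u (j - 1)} := fun x hx => by
      obtain ⟨a, ha, rfl⟩ := hall x hx
      by_contra hout
      have ha₀ : a ≠ 0 := by rintro rfl; simp at hout
      have haj : a ≠ j - 1 := by rintro rfl; simp at hout
      exact disjoint_left.1 hgΦ hx (mem_image_of_mem u (mem_Ico.2 ⟨by omega, by omega⟩))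
    have := (card_le_card hsub).trans card_le_two
    have := hbig g hgH
    omega
  exact ⟨w, hwu, mk_mem_coveredPairs hgH hgj hwg (hwu _ (by omega)),
    mk_mem_coveredPairs hgH hg₀ hwg (hwu 0 (by omega))⟩

lemma exists_fan (hbig : ∀ e ∈ H, 3 ≤ #e)
    (htriple : ∀ T : Finset ℕ, #T = 3 → #(edgesContaining H T) ≤ D)
    (hrich : IsCodegreeRich ρ H) (hρ : k * D ≤ ρ) (hne : H.Nonempty)
    {j : ℕ} (hj : 2 ≤ j) (hjk : j ≤ k) :
    ∃ u : ℕ → ℕ, (∀ a < j, ∀ b < j, u a = u b → a = b) ∧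
      (∀ a, a + 1 < j → (u a, u (a + 1)) ∈ coveredPairs H) ∧
      ∀ a, 0 < a → a < j → (u 0, u a) ∈ coveredPairs H := by
  induction j, hj using Nat.le_induction with
  | base =>
    obtain ⟨e₀, he₀⟩ := hne
    obtain ⟨x, hx, y, hy, hxy⟩ := one_lt_card.1 (by have := hbig e₀ he₀; omega : 1 < #e₀)
    have hcov := mk_mem_coveredPairs he₀ hx hy hxy
    refine ⟨fun a => if a = 0 then x else y, fun a ha b hb hab => ?_, fun a ha => ?_,
      fun a ha₀ ha => ?_⟩
    · interval_cases a <;> interval_cases b <;> simp_all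
    · obtain rfl : a = 0 := by omega
      simpa using hcov
    · obtain rfl : a = 1 := by omega
      simpa using hcov
  | succ j hj ih =>
    obtain ⟨u, hinj, hpath, hhub⟩ := ih (by omega)
    obtain ⟨w, hwu, hpathw, hhubw⟩ := exists_new_vertex_coveredPairs hbig htriple hrich hρ hj
      (by omega) hinj (hhub (j - 1) (by omega) (by omega))
    refine ⟨fun a => if a < j then u a else w, fun a ha b hb hab => ?_, fun a ha => ?_,
      fun a ha₀ ha => ?_⟩
    · beta_reduce at hab
      split_ifs at hab with h₁ h₂ h₂
      · exact hinj a h₁ b h₂ hab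
      · exact absurd hab (hwu a h₁)
      · exact absurd hab.symm (hwu b h₂)
      · omega
    · by_cases h : a + 1 < j
      · simpa [h, show a < j by omega] using hpath a h
      · obtain rfl : a = j - 1 := by omega
        simpa [show j - 1 < j by omega, show ¬ (j - 1 + 1 < j) by omega] using hpathw
    · by_cases h : a < j
      · simpa [h, show 0 < j by omega] using hhub a ha₀ h
      · simpa [h, show 0 < j by omega] using hhubw

lemma exists_injective_cycle_coveredPairs (hk : 3 ≤ k) (hbig : ∀ e ∈ H, 3 ≤ #e)
    (htriple : ∀ T : Finset ℕ, #T = 3 → #(edgesContaining H T) ≤ D)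
    (hrich : IsCodegreeRich ρ H) (hρ : k * D ≤ ρ) (hne : H.Nonempty) :
    ∃ u : ZMod k → ℕ, Function.Injective u ∧ ∀ i, (u i, u (i + 1)) ∈ coveredPairs H := by
  have : NeZero k := ⟨by omega⟩
  have : Fact (1 < k) := ⟨by omega⟩
  obtain ⟨u, hinj, hpath, hhub⟩ := exists_fan hbig htriple hrich hρ hne (by omega) le_rfl
  refine ⟨fun i => u i.val, fun i j h => ZMod.val_injective k
    (hinj _ (ZMod.val_lt i) _ (ZMod.val_lt j) h), fun i => ?_⟩
  have hi := ZMod.val_lt i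
  simp only [ZMod.val_add, ZMod.val_one]
  by_cases h : i.val + 1 < k
  · rw [Nat.mod_eq_of_lt h]
    exact hpath _ h
  · rw [show i.val + 1 = k by omega, Nat.mod_self, show i.val = k - 1 by omega]
    exact swap_mem_coveredPairs (hhub _ (by omega) (by omega))

variable {m : ℕ}

lemma exists_edges_greedy (hunif : ∀ e ∈ H, #e = m)
    (htriple : ∀ T : Finset ℕ, #T = 3 → #(edgesContaining H T) ≤ D)
    (hrich : IsCodegreeRich ρ H) {S : Finset ℕ} (hρ : (#S + k * m) * D ≤ ρ) {a b : ℕ → ℕ}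
    (hab : ∀ j < k, (a j, b j) ∈ coveredPairs H) :
    ∀ n ≤ k, ∃ f : ℕ → Finset ℕ, ∀ j < n, f j ∈ edgesContaining H {a j, b j} ∧
      f j ∩ S ⊆ {a j, b j} ∧ ∀ i < j, f j ∩ f i ⊆ {a j, b j} := by
  intro n
  induction n with
  | zero => exact fun _ => ⟨fun _ => ∅, by simp⟩
  | succ n ih =>
    intro hn
    obtain ⟨f, hf⟩ := ih (by omega)
    set Φ := (S ∪ (range n).biUnion f) \ {a n, b n}
    have hΦ : #Φ ≤ #S + k * m := by
      have hfm : #((range n).biUnion f) ≤ n * m := by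
        simpa using card_biUnion_le_card_mul (range n) f m fun j hj =>
          (hunif _ (mem_edgesContaining.1 (hf j (mem_range.1 hj)).1).1).le
      have : #Φ ≤ #(S ∪ (range n).biUnion f) := card_le_card sdiff_subset
      have := card_union_le S ((range n).biUnion f)
      have := Nat.mul_le_mul_right m (show n ≤ k by omega)
      omega
    obtain ⟨g, hg, hgΦ⟩ := exists_mem_edgesContaining_disjoint htriple
      (mem_coveredPairs.1 (hab n hn)).1 (by simp [Φ]) (by simp [Φ])
      (lt_of_le_of_lt ((Nat.mul_le_mul_right D hΦ).trans hρ) (hrich.lt_card (hab n hn)))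
    have hgsub : ∀ x ∈ g, x ∈ S ∪ (range n).biUnion f → x ∈ ({a n, b n} : Finset ℕ) :=
      fun x hx hxU => by_contra fun h => disjoint_left.1 hgΦ hx (mem_sdiff.2 ⟨hxU, h⟩)
    refine ⟨fun j => if j < n then f j else g, fun j hj => ?_⟩
    rcases Nat.lt_succ_iff_lt_or_eq.1 hj with hjn | rfl
    · simp only [if_pos hjn]
      refine ⟨(hf j hjn).1, (hf j hjn).2.1, fun i hi => ?_⟩
      simpa only [if_pos (hi.trans hjn)] using (hf j hjn).2.2 i hi
    · simp only [lt_irrefl, if_false]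
      refine ⟨hg, fun x hx => hgsub x (mem_inter.1 hx).1 (mem_union_left _ (mem_inter.1 hx).2),
        fun i hi x hx => ?_⟩
      rw [if_pos hi] at hx
      exact hgsub x (mem_inter.1 hx).1
        (mem_union_right _ (mem_biUnion.2 ⟨i, mem_range.2 hi, (mem_inter.1 hx).2⟩))

lemma exists_edges_inter_subset (hunif : ∀ e ∈ H, #e = m)
    (htriple : ∀ T : Finset ℕ, #T = 3 → #(edgesContaining H T) ≤ D)
    (hrich : IsCodegreeRich ρ H) {S : Finset ℕ} (hρ : (#S + k * m) * D ≤ ρ) {a b : ℕ → ℕ}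
    (hab : ∀ j < k, (a j, b j) ∈ coveredPairs H) (hS : ∀ j < k, a j ∈ S ∧ b j ∈ S) :
    ∃ f : ℕ → Finset ℕ, (∀ j < k, f j ∈ edgesContaining H {a j, b j}) ∧
      ∀ i < k, ∀ j < k, i ≠ j → f i ∩ f j ⊆ {a i, b i} ∩ {a j, b j} := by
  obtain ⟨f, hf⟩ := exists_edges_greedy hunif htriple hrich hρ hab k le_rfl
  have hlt : ∀ i j, i < j → j < k → f i ∩ f j ⊆ {a i, b i} ∩ {a j, b j} := by
    intro i j hij hj x hx
    have hxj : x ∈ ({a j, b j} : Finset ℕ) := (hf j hj).2.2 i hij (by rwa [inter_comm])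
    have hxS : x ∈ S := by
      rcases mem_insert.1 hxj with rfl | hxb
      · exact (hS j hj).1
      · exact mem_singleton.1 hxb ▸ (hS j hj).2
    exact mem_inter.2 ⟨(hf i (hij.trans hj)).2.1 (mem_inter.2 ⟨(mem_inter.1 hx).1, hxS⟩), hxj⟩
  refine ⟨f, fun j hj => (hf j hj).1, fun i hi j hj hij => ?_⟩
  rcases lt_or_gt_of_ne hij with h | h
  · exact hlt i j h hj
  · rw [inter_comm, inter_comm {a i, b i}]
    exact hlt j i h hi

/-- A closed walk of covered pairs is realised by edges meeting only at consecutive walk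
vertices. -/
theorem hasLooseCycle_of_isCodegreeRich (hm : 3 ≤ m) (hk : 3 ≤ k) (hunif : ∀ e ∈ H, #e = m)
    (htriple : ∀ T : Finset ℕ, #T = 3 → #(edgesContaining H T) ≤ D)
    (hrich : IsCodegreeRich (k * (m + 1) * D) H) (hne : H.Nonempty) : HasLooseCycle k H := by
  have : NeZero k := ⟨by omega⟩
  have hρ : k * D ≤ k * (m + 1) * D :=
    Nat.mul_le_mul_right D (Nat.le_mul_of_pos_right k (by omega))
  obtain ⟨u, hu, hcov⟩ := exists_injective_cycle_coveredPairs hk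
    (fun e he => hunif e he ▸ hm) htriple hrich hρ hne
  have hS : (#(univ.image u) + k * m) * D ≤ k * (m + 1) * D := by
    have : #(univ.image u) ≤ k := card_image_le.trans (by simp)
    exact Nat.mul_le_mul_right D (by linarith)
  obtain ⟨f, hfH, hf⟩ := exists_edges_inter_subset (a := fun j => u j)
    (b := fun j => u (j + 1)) hunif htriple hrich hS (fun j _ => hcov j)
    (fun j _ => ⟨mem_image_of_mem _ (mem_univ _), mem_image_of_mem _ (mem_univ _)⟩)
  have hfH' (i : ZMod k) : f i.val ∈ edgesContaining H {u i, u (i + 1)} := by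
    simpa using hfH i.val (ZMod.val_lt i)
  refine hasLooseCycle_of_inter_subset hk hu (e := fun i => f i.val)
    (fun i => (mem_edgesContaining.1 (hfH' i)).1) (fun i => ?_) (fun i => ?_)
    (fun i j hij => ?_)
  · simpa [insert_subset_iff] using (mem_edgesContaining.1 (hfH' i)).2
  · exact hunif _ (mem_edgesContaining.1 (hfH' i)).1 ▸ hm
  · simpa using hf i.val (ZMod.val_lt i) j.val (ZMod.val_lt j)
      fun h => hij (ZMod.val_injective k h)

end RichHypergraph

section Turan

variable {m s k : ℕ} {P : Fin m → Finset ℕ}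

/-- Clean `H` to a codegree-rich subgraph with threshold `k (m + 1) s ^ (m - 3)`; a nonempty one
would contain a loose cycle, so every edge of `H` was deleted during the cleaning. -/
theorem card_le_of_not_hasLooseCycle (hm : 3 ≤ m) (hk : 3 ≤ k) (hcard : ∀ i, #(P i) = s)
    {H : Finset (Finset ℕ)} (hH : H ⊆ completeMultipartiteEdges m P)
    (hfree : ¬ HasLooseCycle k H) : #H ≤ m ^ 2 * (k * (m + 1)) * s ^ (m - 1) := by
  obtain ⟨H', hH'H, hcardH, hrich⟩ := exists_isCodegreeRich_subset (k * (m + 1) * s ^ (m - 3)) H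
  have hempty : H' = ∅ := by
    refine not_nonempty_iff_eq_empty.1 fun hne => hfree (HasLooseCycle.mono ?_ hH'H)
    refine hasLooseCycle_of_isCodegreeRich hm hk
      (fun e he => (mem_completeMultipartiteEdges.1 (hH (hH'H he))).2.1) (fun T hT => ?_) hrich hne
    simpa [hT] using (card_le_card (edgesContaining_mono (hH'H.trans hH) T)).trans
      (card_edgesContaining_completeMultipartiteEdges_le hcard T)
  have hpairs : #(coveredPairs H) ≤ (m * s) ^ 2 :=
    (card_coveredPairs_le fun e he => (mem_completeMultipartiteEdges.1 (hH he)).1).trans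
      (Nat.pow_le_pow_left (card_biUnion_parts_le hcard) 2)
  calc #H ≤ #(coveredPairs H) * (k * (m + 1) * s ^ (m - 3)) := by simpa [hempty] using hcardH
    _ ≤ (m * s) ^ 2 * (k * (m + 1) * s ^ (m - 3)) := Nat.mul_le_mul_right _ hpairs
    _ = m ^ 2 * (k * (m + 1)) * s ^ (m - 1) := by
        rw [show m - 1 = m - 3 + 2 by omega, pow_add]
        ring

end Turan

/-- Keeping one edge for each colour outside the vertex set gives a subgraph of `K` on which the
extension only adds new, pairwise distinct vertices, so it is `C_k`-free as well. -/
theorem card_image_sdiff_le_of_not_hasLooseCycle {m s k : ℕ} {P : Fin m → Finset ℕ}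
    (hm : 3 ≤ m) (hk : 3 ≤ k) (hcard : ∀ i, #(P i) = s) {χ : Finset ℕ → ℕ}
    (hfree : ¬ HasLooseCycle k (Extension (completeMultipartiteEdges m P) χ)) :
    #((completeMultipartiteEdges m P).image χ \ univ.biUnion P) ≤
      m ^ 2 * (k * (m + 1)) * s ^ (m - 1) := by
  set K := completeMultipartiteEdges m P
  set V := univ.biUnion P
  obtain ⟨R, hRK, hinj, himage⟩ := exists_subset_injOn_image_eq_of_surjOn
    (K.filter fun e => χ e ∉ V : Set (Finset ℕ)) (K.image χ \ V) fun z hz => by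
      obtain ⟨hzK, hzV⟩ := mem_sdiff.1 hz
      obtain ⟨e, he, rfl⟩ := mem_image.1 hzK
      exact ⟨e, by simpa using ⟨he, hzV⟩, rfl⟩
  have hR : ∀ e ∈ R, e ∈ K ∧ e ⊆ V ∧ χ e ∉ V := fun e he => by
    obtain ⟨heK, heV⟩ := mem_filter.1 (mem_coe.1 (hRK he))
    exact ⟨heK, (mem_completeMultipartiteEdges.1 heK).1, heV⟩
  have hinter : ∀ e ∈ R, ∀ e' ∈ R, e ≠ e' → insert (χ e) e ∩ insert (χ e') e' = e ∩ e' := by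
    intro e he e' he' hne
    have hχ : χ e ≠ χ e' := fun h => hne (hinj he he' h)
    have hχe : χ e ∉ e' := fun h => (hR e he).2.2 ((hR e' he').2.1 h)
    have hχe' : χ e' ∉ e := fun h => (hR e' he').2.2 ((hR e he).2.1 h)
    rw [insert_inter_of_notMem (by simp [hχ, hχe]), inter_insert_of_notMem hχe']
  rw [← himage, card_image_of_injOn hinj]
  refine card_le_of_not_hasLooseCycle hm hk hcard (fun e he => (hR e he).1) fun hcyc => hfree ?_
  refine hcyc.of_inter_eq (by omega) (fun e => insert (χ e) e)
    (fun e he => mem_image_of_mem _ (hR e he).1) (fun e he e' he' h => ?_) hinter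
  have : χ e ∈ insert (χ e') e' := by
    simp only at h
    exact h ▸ mem_insert_self (χ e) e
  rcases mem_insert.1 this with h' | h'
  · exact hinj he he' h'
  · exact absurd ((hR e' he').2.1 h') (hR e he).2.2

section Counting

open Classical

def cycleFreeColoredKsr (m n s k : ℕ) : Set (Finset (Finset ℕ) × (Finset ℕ → ℕ)) :=
  {p | (∃ P : Fin m → Finset ℕ,
          (∀ i, P i ⊆ Finset.Icc 1 n) ∧ (∀ i, (P i).card = s) ∧
          (∀ i j, i ≠ j → Disjoint (P i) (P j)) ∧
          p.1 = completeMultipartiteEdges m P) ∧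
        (∀ e ∈ p.1, p.2 e ∈ Finset.Icc 1 n ∧ p.2 e ∉ e) ∧
        (∀ e ∉ p.1, p.2 e = 0) ∧
        ¬ HasLooseCycle k (Extension p.1 p.2)}

noncomputable def colorings (G : Finset (Finset ℕ)) (A : Finset ℕ) : Finset (Finset ℕ → ℕ) :=
  (G.pi fun _ => A).image fun c e => if h : e ∈ G then c e h else 0

lemma mem_colorings {G : Finset (Finset ℕ)} {A : Finset ℕ} {χ : Finset ℕ → ℕ}
    (hχ : ∀ e ∈ G, χ e ∈ A) (h0 : ∀ e ∉ G, χ e = 0) : χ ∈ colorings G A := by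
  refine mem_image.2 ⟨fun e _ => χ e, mem_pi.2 hχ, funext fun e => ?_⟩
  split_ifs with h
  · rfl
  · exact (h0 e h).symm

lemma card_colorings_le (G : Finset (Finset ℕ)) (A : Finset ℕ) :
    #(colorings G A) ≤ #A ^ #G :=
  card_image_le.trans (by rw [card_pi, prod_const])

lemma card_filter_powerset_card_le {α : Type*} [DecidableEq α] {t : Finset α}
    (ht : t.Nonempty) (M : ℕ) : #(t.powerset.filter (#· ≤ M)) ≤ (M + 1) * #t ^ M := by
  have hsub : t.powerset.filter (#· ≤ M) ⊆ (range (M + 1)).biUnion (t.powersetCard ·) :=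
    fun Z hZ => by
      obtain ⟨hZt, hZM⟩ := mem_filter.1 hZ
      exact mem_biUnion.2 ⟨#Z, mem_range.2 (by omega),
        mem_powersetCard.2 ⟨mem_powerset.1 hZt, rfl⟩⟩
  refine (card_le_card hsub).trans ?_
  simpa using card_biUnion_le_card_mul (range (M + 1)) (t.powersetCard ·) (#t ^ M)
    fun j hj => by
      rw [card_powersetCard]
      exact (Nat.choose_le_pow _ _).trans
        (Nat.pow_le_pow_right ht.card_pos (Nat.lt_succ_iff.1 (mem_range.1 hj)))

noncomputable def coloredKsrFewOuterColors (m n s M : ℕ) :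
    Finset (Finset (Finset ℕ) × (Finset ℕ → ℕ)) :=
  (Fintype.piFinset (fun _ : Fin m => (Icc 1 n).powersetCard s) ×ˢ
      (Icc 1 n).powerset.filter (#· ≤ M)).biUnion fun q =>
    {completeMultipartiteEdges m q.1} ×ˢ
      colorings (completeMultipartiteEdges m q.1) (univ.biUnion q.1 ∪ q.2)

variable {m n s k : ℕ}

lemma cycleFreeColoredKsr_subset (hm : 3 ≤ m) (hk : 3 ≤ k) :
    cycleFreeColoredKsr m n s k ⊆
      coloredKsrFewOuterColors m n s (m ^ 2 * (k * (m + 1)) * s ^ (m - 1)) := by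
  rintro ⟨G, χ⟩ ⟨⟨P, hPn, hPs, -, rfl⟩, hχ, hχ0, hfree⟩
  set Z := (completeMultipartiteEdges m P).image χ \ univ.biUnion P
  have hZn : Z ⊆ Icc 1 n := fun z hz => by
    obtain ⟨e, he, rfl⟩ := mem_image.1 (mem_sdiff.1 hz).1
    exact (hχ e he).1
  have hχZ : ∀ e ∈ completeMultipartiteEdges m P, χ e ∈ univ.biUnion P ∪ Z := fun e he => by
    by_cases hv : χ e ∈ univ.biUnion P
    · exact mem_union_left _ hv
    · exact mem_union_right _ (mem_sdiff.2 ⟨mem_image_of_mem χ he, hv⟩)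
  exact mem_coe.2 <| mem_biUnion.2 ⟨(P, Z),
    mem_product.2 ⟨Fintype.mem_piFinset.2 fun i => mem_powersetCard.2 ⟨hPn i, hPs i⟩,
      mem_filter.2 ⟨mem_powerset.2 hZn, card_image_sdiff_le_of_not_hasLooseCycle hm hk hPs hfree⟩⟩,
    mem_product.2 ⟨mem_singleton_self _, mem_colorings hχZ hχ0⟩⟩

lemma card_coloredKsrFewOuterColors_le (hm : 1 ≤ m) (hn : 1 ≤ n) (hs : 1 ≤ s) (M : ℕ) :
    #(coloredKsrFewOuterColors m n s M) ≤
      n ^ (s * m) * ((M + 1) * n ^ M) * (m * s + M) ^ (s ^ m) := by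
  refine (card_biUnion_le_card_mul _ _ ((m * s + M) ^ (s ^ m)) fun q hq => ?_).trans ?_
  · obtain ⟨hP, hZ⟩ := mem_product.1 hq
    have hPs : ∀ i, #(q.1 i) = s := fun i => (mem_powersetCard.1 (Fintype.mem_piFinset.1 hP i)).2
    have hK := card_edgesContaining_completeMultipartiteEdges_le hPs ∅
    rw [edgesContaining, filter_true_of_mem fun e _ => empty_subset e, card_empty,
      Nat.sub_zero] at hK
    rw [card_product, card_singleton, one_mul]
    calc _ ≤ #(univ.biUnion q.1 ∪ q.2) ^ #(completeMultipartiteEdges m q.1) :=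
          card_colorings_le _ _
      _ ≤ (m * s + M) ^ #(completeMultipartiteEdges m q.1) :=
          Nat.pow_le_pow_left ((card_union_le _ _).trans
            (add_le_add (card_biUnion_parts_le hPs) (mem_filter.1 hZ).2)) _
      _ ≤ (m * s + M) ^ (s ^ m) :=
          Nat.pow_le_pow_right (by nlinarith) hK
  · rw [card_product, Fintype.card_piFinset, prod_const, card_univ, Fintype.card_fin,
      card_powersetCard, Nat.card_Icc, Nat.add_sub_cancel]
    refine Nat.mul_le_mul_right _ (Nat.mul_le_mul ?_ ?_)
    · rw [pow_mul]
      exact Nat.pow_le_pow_left (Nat.choose_le_pow _ _) _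
    · simpa using card_filter_powerset_card_le (t := Icc 1 n) ⟨1, by simp; omega⟩ M

lemma encoding_count_le (c : ℕ) (hm : 2 ≤ m) (hn : 2 ≤ n) (hs : 1 ≤ s) :
    n ^ (s * m) * ((c * s ^ (m - 1) + 1) * n ^ (c * s ^ (m - 1))) *
        (m * s + c * s ^ (m - 1)) ^ (s ^ m) ≤
      n ^ ((m + 2 * c) * s ^ (m - 1)) * (2 * s) ^ ((m + 2 * c) * s ^ m) := by
  set A := s ^ (m - 1)
  have hsA : s ≤ A := le_self_pow₀ hs (by omega)
  have h₁ : n ^ (s * m) ≤ n ^ (m * A) := Nat.pow_le_pow_right (by omega) (by nlinarith)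
  have h₂ : (c * A + 1) * n ^ (c * A) ≤ n ^ (2 * c * A) := by
    have : c * A + 1 ≤ n ^ (c * A) := Nat.lt_two_pow_self.trans_le (Nat.pow_le_pow_left hn _)
    calc _ ≤ n ^ (c * A) * n ^ (c * A) := Nat.mul_le_mul_right _ this
      _ = n ^ (2 * c * A) := by rw [← pow_add]; ring_nf
  have h₃ : m * s + c * A ≤ (2 * s) ^ (m + c) := by
    have hA : A ≤ s ^ (m + c) := Nat.pow_le_pow_right hs (by omega)
    have hs' : s ≤ s ^ (m + c) := hsA.trans hA
    calc m * s + c * A ≤ (m + c) * s ^ (m + c) := by nlinarith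
      _ ≤ 2 ^ (m + c) * s ^ (m + c) :=
          Nat.mul_le_mul_right _ Nat.lt_two_pow_self.le
      _ = (2 * s) ^ (m + c) := (mul_pow _ _ _).symm
  calc _ ≤ n ^ (m * A) * n ^ (2 * c * A) * ((2 * s) ^ (m + c)) ^ (s ^ m) := by gcongr
    _ = n ^ ((m + 2 * c) * A) * (2 * s) ^ ((m + c) * s ^ m) := by
        rw [← pow_add, ← pow_mul]
        ring_nf
    _ ≤ n ^ ((m + 2 * c) * A) * (2 * s) ^ ((m + 2 * c) * s ^ m) :=
        Nat.mul_le_mul_left _ (Nat.pow_le_pow_right (by omega) (Nat.mul_le_mul_right _ (by omega)))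

theorem ncard_cycleFreeColoredKsr_le (hm : 3 ≤ m) (hk : 3 ≤ k) (hn : 2 ≤ n) (hs : 1 ≤ s) :
    (cycleFreeColoredKsr m n s k).ncard ≤
      n ^ ((m + 2 * (m ^ 2 * (k * (m + 1)))) * s ^ (m - 1)) *
        (2 * s) ^ ((m + 2 * (m ^ 2 * (k * (m + 1)))) * s ^ m) :=
  calc (cycleFreeColoredKsr m n s k).ncard
      ≤ #(coloredKsrFewOuterColors m n s (m ^ 2 * (k * (m + 1)) * s ^ (m - 1))) := by
        rw [← Set.ncard_coe_finset]
        exact Set.ncard_le_ncard (cycleFreeColoredKsr_subset hm hk) (finite_toSet _)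
    _ ≤ _ := card_coloredKsrFewOuterColors_le (by omega) (by omega) hs _
    _ ≤ _ := encoding_count_le _ (by omega) hn hs

end Counting

lemma natCast_pow_mul_pow_eq_two_rpow (n s a b : ℕ) (hn : 0 < n) (hs : 0 < s) :
    ((n ^ a * (2 * s) ^ b : ℕ) : ℝ) =
      (2 : ℝ) ^ ((a : ℝ) * Real.logb 2 n + b * (1 + Real.logb 2 s)) := by
  have h2s : 1 + Real.logb 2 s = Real.logb 2 (2 * s) := by
    rw [Real.logb_mul (by norm_num) (by positivity), Real.logb_self_eq_one (by norm_num)]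
  rw [h2s, Real.rpow_add (by norm_num), mul_comm (a : ℝ), mul_comm (b : ℝ),
    Real.rpow_mul (by norm_num), Real.rpow_mul (by norm_num),
    Real.rpow_logb (by norm_num) (by norm_num) (by positivity),
    Real.rpow_logb (by norm_num) (by norm_num) (by positivity),
    Real.rpow_natCast, Real.rpow_natCast]
  push_cast
  ring

/-- For `r > 3`, `k ≥ 3` there is `C > 0` such that for all `n ≥ 2`, `s ≥ 1`, the number
of edge-colored balanced complete `(r-1)`-partite `(r-1)`-graphs `K_{s:r-1}` with vertex
set in `[n]` whose extension is `C_k`-free is at most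
`2^(C·(s^(r-2)·log₂ n + s^(r-1)·(1 + log₂ s)))`. -/
theorem count_colored_Ksr (r k : ℕ) (hr : 3 < r) (hk : 3 ≤ k) :
    ∃ C : ℝ, 0 < C ∧ ∀ n s : ℕ, 2 ≤ n → 1 ≤ s →
      (({p : Finset (Finset ℕ) × (Finset ℕ → ℕ) |
          (∃ P : Fin (r - 1) → Finset ℕ,
            (∀ i, P i ⊆ Finset.Icc 1 n) ∧ (∀ i, (P i).card = s) ∧
            (∀ i j, i ≠ j → Disjoint (P i) (P j)) ∧
            p.1 = completeMultipartiteEdges (r - 1) P) ∧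
          (∀ e ∈ p.1, p.2 e ∈ Finset.Icc 1 n ∧ p.2 e ∉ e) ∧
          (∀ e ∉ p.1, p.2 e = 0) ∧
          ¬ HasLooseCycle k (Extension p.1 p.2)} : Set _).ncard : ℝ)
        ≤ (2 : ℝ) ^ (C * ((s : ℝ) ^ (r - 2) * Real.logb 2 n +
            (s : ℝ) ^ (r - 1) * (1 + Real.logb 2 s))) := by
  set c := r - 1 + 2 * ((r - 1) ^ 2 * (k * (r - 1 + 1)))
  refine ⟨c, by exact_mod_cast (show 0 < c by omega), fun n s hn hs => ?_⟩
  have hcount := ncard_cycleFreeColoredKsr_le (m := r - 1) (by omega) hk hn hs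
  calc ((cycleFreeColoredKsr (r - 1) n s k).ncard : ℝ)
      ≤ ((n ^ (c * s ^ (r - 2)) * (2 * s) ^ (c * s ^ (r - 1)) : ℕ) : ℝ) := by
        rw [show r - 2 = r - 1 - 1 by omega]
        exact_mod_cast hcount
    _ = _ := by
        rw [natCast_pow_mul_pow_eq_two_rpow _ _ _ _ (by omega) (by omega)]
        push_cast
        congr 1
        ring
end

section
/- Let r, k ≥ 3 be integers and let H be a nonempty r-uniform hypergraph. If every (r−1)-set of vertices with positive codegree in H has codegree greater than r·k, then H contains a loose k-cycle. -/
theorem sup_inf_sup_eq_inf_of_disjoint {β : Type*} [DistribLattice β] [OrderBot β]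
    {a b p q : β} (hpq : Disjoint p q) (hpb : Disjoint p b) (haq : Disjoint a q) :
    (a ⊔ p) ⊓ (b ⊔ q) = a ⊓ b := by
  rw [inf_sup_left, inf_sup_right, inf_sup_right, haq.eq_bot, hpb.eq_bot, hpq.eq_bot]
  simp

theorem ZMod.self_ne_add_natCast {k m : ℕ} (i : ZMod k) (hm0 : 0 < m) (hmk : m < k) :
    i ≠ i + m := by
  simpa [ZMod.natCast_eq_zero_iff] using fun h => absurd (Nat.le_of_dvd hm0 h) (by omega)

section

open Finset Function

variable {α : Type*} [DecidableEq α] {H : Finset (Finset α)} {r d : ℕ}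

def MinPosCodegreeGT (H : Finset (Finset α)) (r d : ℕ) : Prop :=
  ∀ S : Finset α, S.card = r - 1 → (∃ v, v ∉ S ∧ insert v S ∈ H) →
    d < ({v : α | v ∉ S ∧ insert v S ∈ H} : Set α).ncard

namespace MinPosCodegreeGT

theorem exists_completion_notMem (hH : MinPosCodegreeGT H r d) {S F : Finset α}
    (hS : S.card = r - 1) (hSH : ∃ v, v ∉ S ∧ insert v S ∈ H) (hF : F.card ≤ d) :
    ∃ v, v ∉ S ∧ v ∉ F ∧ insert v S ∈ H := by
  by_contra! h
  have hsub : {v | v ∉ S ∧ insert v S ∈ H} ⊆ (F : Set α) :=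
    fun v hv => by_contra fun hvF => h v hv.1 hvF hv.2
  have := (Set.ncard_le_ncard hsub F.finite_toSet).trans_eq (Set.ncard_coe_finset F)
  have := hH S hS hSH
  omega

/-- Induction on `#((S \ K) ∩ F)`: swapping a vertex `w` of `(S \ K) ∩ F` for a completion
`z ∉ F` of `S` yields the sub-edge `insert z (S.erase w)`, with one bad vertex fewer. -/
theorem exists_edge_superset_of_subedge (hH : MinPosCodegreeGT H r d) {K S F : Finset α}
    (hS : S.card = r - 1) (hSH : ∃ v, v ∉ S ∧ insert v S ∈ H) (hKS : K ⊆ S)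
    (hF : F.card ≤ d) : ∃ E ∈ H, K ⊆ E ∧ Disjoint (E \ K) F := by
  induction hn : ((S \ K) ∩ F).card generalizing S with
  | zero =>
    obtain ⟨z, hzS, hzF, hzH⟩ := hH.exists_completion_notMem hS hSH hF
    refine ⟨insert z S, hzH, hKS.trans (subset_insert _ _), ?_⟩
    rw [card_eq_zero, ← disjoint_iff_inter_eq_empty] at hn
    rw [insert_sdiff_of_notMem _ fun hzK => hzS (hKS hzK)]
    exact disjoint_insert_left.mpr ⟨hzF, hn⟩
  | succ n ih =>
    obtain ⟨w, hw⟩ : ((S \ K) ∩ F).Nonempty := card_pos.mp (by omega)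
    obtain ⟨z, hzS, hzF, hzH⟩ := hH.exists_completion_notMem hS hSH hF
    simp only [mem_inter, mem_sdiff] at hw
    obtain ⟨⟨hwS, hwK⟩, hwF⟩ := hw
    have hzS' : z ∉ S.erase w := fun h => hzS (mem_of_mem_erase h)
    have hcard : (insert z (S.erase w)).card = r - 1 := by
      rw [card_insert_of_notMem hzS', card_erase_of_mem hwS, hS]
      have := card_pos.mpr ⟨w, hwS⟩
      omega
    have hsub : ∃ v, v ∉ insert z (S.erase w) ∧ insert v (insert z (S.erase w)) ∈ H :=
      ⟨w, by simp [ne_of_mem_of_not_mem hwS hzS], by rwa [insert_comm, insert_erase hwS]⟩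
    have hbad : (insert z (S.erase w) \ K) ∩ F = ((S \ K) ∩ F).erase w := by
      ext x; simp only [mem_inter, mem_sdiff, mem_insert, mem_erase]; grind
    refine ih hcard hsub (fun x hx => mem_insert_of_mem (mem_erase.mpr ⟨?_, hKS hx⟩)) ?_
    · rintro rfl; exact hwK hx
    · rw [hbad, card_erase_of_mem (by simp [hwS, hwK, hwF]), hn, Nat.add_sub_cancel]

theorem exists_edge_superset (hH : MinPosCodegreeGT H r d) (huni : ∀ e ∈ H, e.card = r)
    {f K F : Finset α} (hf : f ∈ H) (hKf : K ⊆ f) (hK : K.card < r) (hF : F.card ≤ d) :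
    ∃ E ∈ H, K ⊆ E ∧ Disjoint (E \ K) F := by
  obtain ⟨S, hKS, hSf, hS⟩ :=
    exists_subsuperset_card_eq hKf (n := r - 1) (by omega) (by rw [huni f hf]; omega)
  obtain ⟨v, hvS, hvf⟩ := exists_eq_insert_iff.mpr ⟨hSf, by rw [hS, huni f hf]; omega⟩
  exact hH.exists_edge_superset_of_subedge hS ⟨v, hvS, hvf ▸ hf⟩ hKS hF

theorem exists_edge_insert_superset (hH : MinPosCodegreeGT H r d)
    (huni : ∀ e ∈ H, e.card = r) {f K F : Finset α} (hf : f ∈ H) (hKf : K ⊆ f)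
    (hK : K.card < r) (hF : F.card ≤ d) : ∃ z ∉ F, ∃ E ∈ H, insert z K ⊆ E := by
  obtain ⟨E, hE, hKE, hEF⟩ := hH.exists_edge_superset huni hf hKf hK hF
  obtain ⟨z, hz⟩ : (E \ K).Nonempty :=
    sdiff_nonempty.mpr fun hEK => (card_le_card hEK).not_gt (huni E hE ▸ hK)
  exact ⟨z, disjoint_left.mp hEF hz, E, hE, insert_subset (mem_sdiff.mp hz).1 hKE⟩

/-- Keeping `a` in every witness edge is what lets the path be extended from its last vertex,
and later closed up through `v 0 = a`. -/
theorem exists_link_path (hH : MinPosCodegreeGT H r d) (hr : 3 ≤ r)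
    (huni : ∀ e ∈ H, e.card = r) {g : Finset α} (hg : g ∈ H) {a b : α} (ha : a ∈ g)
    (hb : b ∈ g) (hab : a ≠ b) {n : ℕ} (hn : n < d) :
    ∃ v : ℕ → α, v 0 = a ∧ Set.InjOn v (Set.Iio (n + 2)) ∧
      ∀ j ≤ n, ∃ f ∈ H, a ∈ f ∧ v j ∈ f ∧ v (j + 1) ∈ f := by
  induction n with
  | zero =>
    refine ⟨fun j => if j = 0 then a else b, rfl, ?_, fun j hj => ?_⟩
    · intro i hi j hj hij
      simp only [Set.mem_Iio] at hi hj
      interval_cases i <;> interval_cases j <;> simp_all [eq_comm]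
    · obtain rfl : j = 0 := by omega
      exact ⟨g, hg, ha, ha, hb⟩
  | succ n ih =>
    obtain ⟨v, hv0, hinj, hpath⟩ := ih (by omega)
    obtain ⟨f, hf, haf, -, hvf⟩ := hpath n le_rfl
    have hav : a ≠ v (n + 1) := fun h =>
      absurd (hinj (by simp) (by simp) (hv0.trans h)) (by omega)
    obtain ⟨z, hz, E, hE, hzE⟩ := hH.exists_edge_insert_superset huni hf
      (K := {a, v (n + 1)}) (by simp [insert_subset_iff, haf, hvf])
      (by rw [card_pair hav]; omega)
      (F := (range (n + 2)).image v) (card_image_le.trans (by simp; omega))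
    have hzv : ∀ j < n + 2, v j ≠ z := fun j hj h => hz (mem_image.mpr ⟨j, by simpa, h⟩)
    have hupd : ∀ j < n + 2, update v (n + 2) z j = v j :=
      fun j hj => update_of_ne (by omega) _ _
    refine ⟨update v (n + 2) z, by rw [hupd 0 (by omega), hv0], ?_, fun j hj => ?_⟩
    · intro i hi j hj hij
      simp only [Set.mem_Iio] at hi hj
      rcases (by omega : i = n + 2 ∨ i < n + 2) with rfl | hi <;>
        rcases (by omega : j = n + 2 ∨ j < n + 2) with rfl | hj
      · rfl
      · rw [hupd j hj, update_self] at hij; exact absurd hij.symm (hzv j hj)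
      · rw [hupd i hi, update_self] at hij; exact absurd hij (hzv i hi)
      · rw [hupd i hi, hupd j hj] at hij; exact hinj hi hj hij
    · rcases (by omega : j ≤ n ∨ j = n + 1) with hj | rfl
      · rw [hupd j (by omega), hupd (j + 1) (by omega)]; exact hpath j hj
      · rw [hupd (n + 1) (by omega), update_self]
        simp only [insert_subset_iff, singleton_subset_iff] at hzE
        exact ⟨E, hE, hzE.2.1, hzE.2.2, hzE.1⟩

/-- The path used has `k + 1` vertices; the witness edge of the extra pair `(v (k - 1), v k)`
contains `a = v 0`, which closes the cycle. -/
theorem exists_shadow_cycle (hH : MinPosCodegreeGT H r d) (hr : 3 ≤ r)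
    (huni : ∀ e ∈ H, e.card = r) (hne : H.Nonempty) {k : ℕ} [NeZero k] (hk : k ≤ d) :
    ∃ u : ZMod k → α, Injective u ∧ ∀ i, ∃ f ∈ H, u i ∈ f ∧ u (i + 1) ∈ f := by
  obtain ⟨g, hg⟩ := hne
  obtain ⟨a, ha, b, hb, hab⟩ := one_lt_card.mp (by rw [huni g hg]; omega)
  have hk0 := NeZero.pos k
  obtain ⟨v, hv0, hinj, hpath⟩ :=
    hH.exists_link_path hr huni hg ha hb hab (n := k - 1) (by omega)
  have hlt (i : ZMod k) : i.val < k - 1 + 2 := by have := ZMod.val_lt i; omega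
  refine ⟨fun i => v i.val, fun i j h => ZMod.val_injective k (hinj (hlt i) (hlt j) h),
    fun i => ?_⟩
  obtain ⟨f, hf, haf, hvf, hvf'⟩ := hpath i.val (by have := ZMod.val_lt i; omega)
  refine ⟨f, hf, hvf, ?_⟩
  change v (i + 1).val ∈ f
  rw [ZMod.val_add, ZMod.val_one_eq_one_mod, Nat.add_mod_mod]
  rcases (show i.val + 1 ≤ k from ZMod.val_lt i).lt_or_eq with h | h
  · rwa [Nat.mod_eq_of_lt h]
  · rwa [h, Nat.mod_self, hv0]

/-- The parts are chosen one index at a time, the new edge avoiding `U` and all parts chosen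
before; `hd` bounds the number of these forbidden vertices. -/
theorem exists_private_parts (hH : MinPosCodegreeGT H r d) (huni : ∀ e ∈ H, e.card = r)
    {ι : Type*} [Fintype ι] [DecidableEq ι] (c : ι → Finset α) (U : Finset α)
    (hc : ∀ i, ∃ f ∈ H, c i ⊆ f) (hcr : ∀ i, (c i).card < r)
    (hd : U.card + ∑ i, (r - (c i).card) ≤ d) :
    ∃ P : ι → Finset α,
      (∀ i, c i ∪ P i ∈ H ∧ Disjoint (P i) U ∧ (P i).card = r - (c i).card) ∧
        Pairwise (Disjoint on P) := by
  suffices ∀ s : Finset ι, ∃ P : ι → Finset α,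
      (∀ i ∈ s, c i ∪ P i ∈ H ∧ Disjoint (P i) U ∧ (P i).card = r - (c i).card) ∧
        (s : Set ι).PairwiseDisjoint P by
    obtain ⟨P, hP, hdisj⟩ := this univ
    refine ⟨P, fun i => hP i (mem_univ i), Set.pairwise_univ.mp ?_⟩
    simpa [Set.PairwiseDisjoint] using hdisj
  intro s
  induction s using Finset.induction_on with
  | empty => exact ⟨fun _ => ∅, by simp, by simp⟩
  | insert i s hi ih =>
    obtain ⟨P, hP, hdisj⟩ := ih
    obtain ⟨f, hf, hcf⟩ := hc i
    have hF : (U ∪ s.biUnion P).card ≤ d := calc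
      _ ≤ U.card + ∑ j ∈ s, (P j).card :=
        (card_union_le _ _).trans (by gcongr; exact card_biUnion_le)
      _ = U.card + ∑ j ∈ s, (r - (c j).card) := by rw [sum_congr rfl fun j hj => (hP j hj).2.2]
      _ ≤ U.card + ∑ j, (r - (c j).card) := by gcongr; exact subset_univ s
      _ ≤ d := hd
    obtain ⟨E, hE, hcE, hEF⟩ := hH.exists_edge_superset huni hf hcf (hcr i) hF
    have hPs : ∀ j ∈ s, update P i (E \ c i) j = P j :=
      fun j hj => update_of_ne (ne_of_mem_of_not_mem hj hi) _ _
    refine ⟨update P i (E \ c i), fun j hj => ?_, ?_⟩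
    · rcases mem_insert.mp hj with rfl | hj
      · rw [update_self, union_sdiff_of_subset hcE, card_sdiff_of_subset hcE, huni E hE]
        exact ⟨hE, disjoint_of_subset_right subset_union_left hEF, rfl⟩
      · rw [hPs j hj]; exact hP j hj
    · rw [coe_insert, Set.pairwiseDisjoint_insert_of_notMem (by simpa)]
      refine ⟨fun x hx y hy hxy => ?_, fun j hj => ?_⟩
      · simpa only [onFun, hPs x hx, hPs y hy] using hdisj hx hy hxy
      · rw [update_self, hPs j hj]
        exact disjoint_of_subset_right
          (subset_union_right.trans' (subset_biUnion_of_mem P hj)) hEF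

end MinPosCodegreeGT

end

section

open Finset Function

theorem hasLooseCycle_of_private_parts {k : ℕ} (hk : 3 ≤ k) {H : Finset (Finset ℕ)}
    (u : ZMod k → ℕ) (hu : Injective u) (P : ZMod k → Finset ℕ)
    (hH : ∀ i, {u i, u (i + 1)} ∪ P i ∈ H) (hPu : ∀ i j, u j ∉ P i)
    (hPne : ∀ i, (P i).Nonempty) (hP : Pairwise (Disjoint on P)) : HasLooseCycle k H := by
  have hne1 (i : ZMod k) : i ≠ i + 1 := by
    simpa using ZMod.self_ne_add_natCast i (m := 1) (by omega) (by omega)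
  have hne2 (i : ZMod k) : i ≠ i + 1 + 1 := by
    rw [add_assoc, one_add_one_eq_two]
    simpa using ZMod.self_ne_add_natCast i (m := 2) (by omega) (by omega)
  have hinter (i j : ZMod k) (hij : i ≠ j) :
      ({u i, u (i + 1)} ∪ P i) ∩ ({u j, u (j + 1)} ∪ P j) =
        {u i, u (i + 1)} ∩ {u j, u (j + 1)} :=
    sup_inf_sup_eq_inf_of_disjoint (hP hij) (by simp [hPu]) (by simp [hPu])
  refine ⟨fun i => {u i, u (i + 1)} ∪ P i, fun i => u (i + 1), fun i j hij => ?_,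
    hu.comp (add_left_injective 1), hH, fun i => ?_, fun i j hji hji1 hij1 => ?_⟩
  · by_contra hij'
    obtain ⟨x, hx⟩ := hPne i
    have hxi : x ∈ ({u i, u (i + 1)} ∪ P i) ∩ ({u j, u (j + 1)} ∪ P j) := by
      simp only at hij
      simp [← hij, hx]
    rw [hinter i j hij'] at hxi
    simp only [mem_inter, mem_insert, mem_singleton] at hxi
    rcases hxi.1 with rfl | rfl <;> exact hPu i _ hx
  · simp only
    rw [hinter i (i + 1) (hne1 i)]
    have := hu.ne (hne1 i)
    have := hu.ne (hne2 i)
    ext x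
    simp only [mem_inter, mem_insert, mem_singleton]
    grind
  · simp only
    rw [hinter i j (Ne.symm hji)]
    have := hu.ne hji
    have := hu.ne hij1
    have := hu.ne hji1
    have : u (i + 1) ≠ u (j + 1) := hu.ne fun h => hji (add_right_cancel h).symm
    ext x
    simp only [mem_inter, mem_insert, mem_singleton, notMem_empty, iff_false]
    grind

theorem hasLooseCycle_of_shadow_cycle {r k : ℕ} (hr : 3 ≤ r) (hk : 3 ≤ k)
    {H : Finset (Finset ℕ)} (huni : ∀ e ∈ H, e.card = r)
    (hH : MinPosCodegreeGT H r (r * k))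
    (u : ZMod k → ℕ) (hu : Injective u) (hcover : ∀ i, ∃ f ∈ H, u i ∈ f ∧ u (i + 1) ∈ f) :
    HasLooseCycle k H := by
  have : NeZero k := ⟨by omega⟩
  have hpair (i : ZMod k) : ({u i, u (i + 1)} : Finset ℕ).card = 2 :=
    card_pair <| hu.ne <| by
      simpa using ZMod.self_ne_add_natCast i (m := 1) (by omega) (by omega)
  have hbound :
      (univ.image u).card + ∑ i, (r - ({u i, u (i + 1)} : Finset ℕ).card) ≤ r * k := by
    simp only [hpair, sum_const, card_univ, ZMod.card, smul_eq_mul]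
    have := (card_image_le (s := univ) (f := u)).trans_eq (by simp : univ.card = k)
    zify [show 2 ≤ r by omega] at this ⊢
    nlinarith
  have hcore (i : ZMod k) : ∃ f ∈ H, {u i, u (i + 1)} ⊆ f := by
    obtain ⟨f, hf, hif, hi1f⟩ := hcover i
    exact ⟨f, hf, insert_subset hif (singleton_subset_iff.mpr hi1f)⟩
  obtain ⟨P, hP, hdisj⟩ := hH.exists_private_parts huni (fun i => {u i, u (i + 1)})
    (univ.image u) hcore (fun i => by rw [hpair]; omega) hbound
  refine hasLooseCycle_of_private_parts hk u hu P (fun i => (hP i).1)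
    (fun i j => disjoint_right.mp (hP i).2.1 (mem_image_of_mem u (mem_univ j)))
    (fun i => card_pos.mp ?_) hdisj
  rw [(hP i).2.2, hpair]
  omega

end

/-- If `H` is a nonempty `r`-graph in which every `(r-1)`-set of positive codegree has
codegree greater than `r·k`, then `H` contains a loose `k`-cycle. -/
theorem loose_cycle_of_large_codegree (r k : ℕ) (hr : 3 ≤ r) (hk : 3 ≤ k)
    (H : Finset (Finset ℕ)) (hne : H.Nonempty) (huni : ∀ e ∈ H, e.card = r)
    (hcodeg : ∀ S : Finset ℕ, S.card = r - 1 →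
      (∃ v, v ∉ S ∧ insert v S ∈ H) →
      r * k < ({v : ℕ | v ∉ S ∧ insert v S ∈ H} : Set ℕ).ncard) :
    HasLooseCycle k H := by
  have : NeZero k := ⟨by omega⟩
  obtain ⟨u, hu, hcover⟩ := MinPosCodegreeGT.exists_shadow_cycle hcodeg hr huni hne
    (Nat.le_mul_of_pos_left k (by omega))
  exact hasLooseCycle_of_shadow_cycle hr hk huni hcodeg u hu hcover
end

section
/- Let r, k ≥ 3 be integers. If F is a nonempty graph in which every edge is contained in more than r·k triangles, then F contains a cycle of length exactly k. -/
/-!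
Fix an edge `uv`. Every neighbour `x` of `v` has more than `r k ≥ k` common neighbours with `v`,
so the graph induced on the neighbourhood of `v` has minimum degree at least `k - 2`. Greedily
extending a path there gives a path on `k - 1` vertices, and joining both of its ends to `v`
closes a cycle of length `k`.
-/

open Finset

namespace SimpleGraph

variable {V : Type*} {G : SimpleGraph V}

theorem exists_nodup_isChain_of_le_card_neighborFinset_inter [DecidableEq V] [G.LocallyFinite]
    {s : Finset V} (hs : s.Nonempty) {n : ℕ}
    (hdeg : ∀ x ∈ s, n ≤ #(G.neighborFinset x ∩ s)) :
    ∃ l : List V, l.length = n + 1 ∧ l.Nodup ∧ l.IsChain G.Adj ∧ ∀ x ∈ l, x ∈ s := by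
  suffices ∀ j ≤ n, ∃ l : List V, l.length = j + 1 ∧ l.Nodup ∧ l.IsChain G.Adj ∧ ∀ x ∈ l, x ∈ s
    from this n le_rfl
  intro j hj
  induction j with
  | zero =>
    obtain ⟨w, hw⟩ := hs
    exact ⟨[w], rfl, List.nodup_singleton w, List.isChain_singleton w, by simpa using hw⟩
  | succ j ih =>
    obtain ⟨_ | ⟨x, t⟩, hlen, hnd, hch, hsub⟩ := ih (by omega)
    · simp at hlen
    have hcard : #t.toFinset < #(G.neighborFinset x ∩ s) := by
      have := t.toFinset_card_le
      have := hdeg x (hsub x List.mem_cons_self)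
      simp only [List.length_cons] at hlen
      omega
    obtain ⟨y, hy, hyt⟩ := exists_mem_notMem_of_card_lt_card hcard
    rw [mem_inter, mem_neighborFinset] at hy
    refine ⟨y :: x :: t, by simpa using hlen, ?_, List.isChain_cons_cons.2 ⟨hy.1.symm, hch⟩, ?_⟩
    · refine List.nodup_cons.2 ⟨?_, hnd⟩
      simp only [List.mem_cons, not_or]
      exact ⟨hy.1.ne', by simpa using hyt⟩
    · simpa [hy.2] using hsub

theorem exists_injective_zmod_cycle_of_isChain {l : List V} (hne : l ≠ []) (hnd : l.Nodup)
    (hch : l.IsChain G.Adj) (hclose : G.Adj (l.getLast hne) (l.head hne)) :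
    ∃ x : ZMod l.length → V, Function.Injective x ∧ ∀ i, G.Adj (x i) (x (i + 1)) := by
  obtain ⟨n, hn⟩ : ∃ n, l.length = n + 1 :=
    ⟨l.length - 1, by have := List.length_pos_iff.2 hne; omega⟩
  rw [hn]
  refine ⟨fun i => l[i.val]'(by rw [hn]; exact ZMod.val_lt i), fun i j hij => ?_, fun i => ?_⟩
  · exact ZMod.val_injective _ ((hnd.getElem_inj_iff).1 hij)
  · have hsucc : (i + 1).val = (i.val + 1) % (n + 1) := by
      rw [ZMod.val_add, ZMod.val_one_eq_one_mod, Nat.add_mod_mod]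
    have hi := ZMod.val_lt i
    by_cases hlast : i.val + 1 < n + 1
    · simp only [hsucc, Nat.mod_eq_of_lt hlast]
      exact List.isChain_iff_getElem.1 hch _ (by omega)
    · have hival : i.val = n := by omega
      simp only [hsucc, hival, Nat.mod_self]
      simpa [List.getLast_eq_getElem, List.head_eq_getElem, hn] using hclose

end SimpleGraph

open SimpleGraph in
/-- If every edge of a nonempty graph `F` lies in more than `r·k` triangles, then `F`
contains a cycle of length exactly `k`. -/
theorem cycle_of_many_triangles {V : Type*} [Fintype V] [DecidableEq V]
    (r k : ℕ) (hr : 3 ≤ r) (hk : 3 ≤ k)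
    (F : SimpleGraph V) [DecidableRel F.Adj]
    (hne : ∃ u v : V, F.Adj u v)
    (htri : ∀ u v : V, F.Adj u v →
      r * k < (F.neighborFinset u ∩ F.neighborFinset v).card) :
    ∃ x : ZMod k → V, Function.Injective x ∧ ∀ i, F.Adj (x i) (x (i + 1)) := by
  obtain ⟨u, v, huv⟩ := hne
  have hdeg : ∀ x ∈ F.neighborFinset v, k - 2 ≤ #(F.neighborFinset x ∩ F.neighborFinset v) :=
    fun x hx => by
      have := htri x v ((F.mem_neighborFinset v x).1 hx).symm
      have := Nat.le_mul_of_pos_left k (show 0 < r by omega)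
      omega
  obtain ⟨p, hlen, hnd, hch, hsub⟩ :=
    exists_nodup_isChain_of_le_card_neighborFinset_inter ⟨u, by simpa using huv.symm⟩ hdeg
  have hp : p ≠ [] := List.ne_nil_of_length_eq_add_one hlen
  have hcycle := exists_injective_zmod_cycle_of_isChain (List.cons_ne_nil v p)
    (List.nodup_cons.2 ⟨fun hv => by simpa using hsub v hv, hnd⟩)
    (List.isChain_cons.2 ⟨fun y hy => by simpa using hsub y (List.mem_of_mem_head? hy), hch⟩)
    (by simpa [List.getLast_cons hp, adj_comm] using hsub _ (List.getLast_mem hp))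
  rwa [List.length_cons, hlen, show k - 2 + 1 + 1 = k by omega] at hcycle
end

section
/- For all integers r ≥ 3 and k ≥ 3 there exists a constant c = c(r,k) > 0 (one may take c = ⌊k/2⌋·r^{r−1}/(r−1)!) with the following property: if G is an r-partite r-uniform hypergraph whose r parts each have size s and G has more than c·s^{r−1} edges, then G contains a loose k-cycle. -/
/-!
Repeatedly deleting all edges through a pair of vertices whose codegree is positive but below `K`
costs fewer than `K` edges per pair, so more than `K·(rs)²` edges leave a nonempty subgraph `H` in
which every pair lying in an edge lies in at least `K` edges. In an `r`-partite graph a triple lies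
in at most `s^(r-3)` edges, so once `K > k(r+2)·s^(r-3)`, every such pair lies in an edge of `H`
avoiding any prescribed set of at most `k(r+2)` other vertices. This gives every edge of the
2-shadow of `H` a common neighbour outside any small set, hence a `k`-cycle in the shadow; then
the `k` consecutive pairs of that cycle are covered greedily by edges of `H` that meet each other
only at the cycle vertices, which is a loose `k`-cycle.
-/

open Finset Function

section Codegree

variable {α : Type*} [DecidableEq α]

def codegree (H : Finset (Finset α)) (T : Finset α) : ℕ := #{h ∈ H | T ⊆ h}

lemma codegree_mono {H H' : Finset (Finset α)} (hH : H ⊆ H') (T : Finset α) :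
    codegree H T ≤ codegree H' T :=
  card_le_card (filter_subset_filter _ hH)

def PairCodegreeGE (K : ℕ) (H : Finset (Finset α)) : Prop :=
  ∀ h ∈ H, ∀ T ∈ h.powersetCard 2, K ≤ codegree H T

lemma exists_subset_pairCodegreeGE (K : ℕ) (P : Finset (Finset α)) :
    ∀ H : Finset (Finset α), (∀ h ∈ H, h.powersetCard 2 ⊆ P) →
      ∃ H' ⊆ H, PairCodegreeGE K H' ∧ #H ≤ #H' + K * #P := by
  induction P using Finset.strongInduction with
  | H P ih =>
  intro H hP
  by_cases hgood : PairCodegreeGE K H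
  · exact ⟨H, subset_rfl, hgood, le_self_add⟩
  obtain ⟨h, hH, T, hT, hlow⟩ : ∃ h ∈ H, ∃ T ∈ h.powersetCard 2, codegree H T < K := by
    simpa only [PairCodegreeGE, not_forall, not_le, exists_prop] using hgood
  have hTP : T ∈ P := hP h hH hT
  set H₁ := H.filter fun h => ¬T ⊆ h
  have hP₁ : ∀ h ∈ H₁, h.powersetCard 2 ⊆ P.erase T := by
    intro h' hh' T' hT'
    rw [mem_filter] at hh'
    refine mem_erase.2 ⟨?_, hP h' hh'.1 hT'⟩
    rintro rfl
    exact hh'.2 (mem_powersetCard.1 hT').1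
  obtain ⟨H', hH'H₁, hgood', hcard⟩ := ih _ (erase_ssubset hTP) H₁ hP₁
  refine ⟨H', hH'H₁.trans (filter_subset _ _), hgood', ?_⟩
  have hsplit : codegree H T + #H₁ = #H := card_filter_add_card_filter_not _
  rw [← card_erase_add_one hTP, mul_add_one]
  omega

lemma exists_mem_inter_subset_of_card_mul_lt {H : Finset (Finset α)} {T : Finset α} {D : ℕ}
    (hD : ∀ U, #U = #T + 1 → codegree H U ≤ D) (W : Finset α) (hW : #W * D < codegree H T) :
    ∃ h ∈ H, T ⊆ h ∧ h ∩ W ⊆ T := by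
  by_contra! hbad
  have hcover : H.filter (T ⊆ ·) ⊆ (W \ T).biUnion fun x => H.filter (insert x T ⊆ ·) := by
    intro h hh
    rw [mem_filter] at hh
    obtain ⟨x, hx, hxT⟩ := not_subset.1 (hbad h hh.1 hh.2)
    rw [mem_inter] at hx
    exact mem_biUnion.2
      ⟨x, mem_sdiff.2 ⟨hx.2, hxT⟩, mem_filter.2 ⟨hh.1, insert_subset hx.1 hh.2⟩⟩
  have hbound : codegree H T ≤ #(W \ T) * D :=
    (card_le_card hcover).trans <| card_biUnion_le_card_mul _ _ _ fun x hx =>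
      hD _ (card_insert_of_notMem (mem_sdiff.1 hx).2)
  have := Nat.mul_le_mul_right D (card_le_card (sdiff_subset : W \ T ⊆ W))
  omega

end Codegree

section SimpleGraphCycle

variable {α : Type*} [DecidableEq α]

lemma SimpleGraph.exists_path_avoiding (G : SimpleGraph α) {m : ℕ}
    (hG : ∀ x y, G.Adj x y → ∀ F : Finset α, #F ≤ m → ∃ c ∉ F, G.Adj x c ∧ G.Adj c y)
    (n : ℕ) (hn : 1 ≤ n) :
    ∀ a b (F : Finset α), G.Adj a b → a ∉ F → b ∉ F → #F + n ≤ m →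
      ∃ w : ℕ → α, w 0 = a ∧ w n = b ∧ Set.InjOn w (Set.Iic n) ∧
        (∀ i < n, G.Adj (w i) (w (i + 1))) ∧ ∀ i ≤ n, w i ∉ F := by
  induction n, hn using Nat.le_induction with
  | base =>
    intro a b F hab ha hb _
    refine ⟨fun i => if i = 0 then a else b, by simp, by simp, ?_, ?_, ?_⟩
    · intro i hi j hj hij
      simp only [Set.mem_Iic] at hi hj
      interval_cases i <;> interval_cases j <;> simp_all [hab.ne, hab.ne.symm]
    · intro i hi
      obtain rfl : i = 0 := by omega
      simpa using hab
    · intro i _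
      dsimp only
      split_ifs <;> assumption
  | succ n hn ih =>
    intro a b F hab ha hb hF
    have hbF : #(insert b F) ≤ #F + 1 := card_insert_le _ _
    obtain ⟨c, hcF, hac, hcb⟩ := hG a b hab (insert b F) (by omega)
    obtain ⟨w, hw0, hwn, hinj, hadj, hwF⟩ :=
      ih a c (insert b F) hac (by simp [ha, hab.ne]) hcF (by omega)
    have hwb : ∀ i ≤ n, w i ≠ b := fun i hi h => hwF i hi (h ▸ mem_insert_self _ _)
    refine ⟨fun i => if i ≤ n then w i else b, by simp [hw0], by simp, ?_, ?_, ?_⟩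
    · intro i hi j hj hij
      simp only [Set.mem_Iic] at hi hj
      by_cases hin : i ≤ n <;> by_cases hjn : j ≤ n <;>
        simp only [hin, hjn, if_true, if_false] at hij
      · exact hinj hin hjn hij
      · exact absurd hij (hwb i hin)
      · exact absurd hij.symm (hwb j hjn)
      · omega
    · intro i hi
      rcases Nat.lt_succ_iff_lt_or_eq.1 hi with hi | rfl
      · simpa [hi.le, Nat.succ_le_of_lt hi] using hadj i hi
      · simpa [hwn] using hcb
    · intro i hi
      dsimp only
      split_ifs with hin
      · exact fun h => hwF i hin (mem_insert_of_mem h)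
      · exact hb

lemma SimpleGraph.exists_cycle (G : SimpleGraph α) {m : ℕ}
    (hG : ∀ x y, G.Adj x y → ∀ F : Finset α, #F ≤ m → ∃ c ∉ F, G.Adj x c ∧ G.Adj c y)
    {k : ℕ} (hk : 2 ≤ k) (hkm : k ≤ m + 1) {a b : α} (hab : G.Adj a b) :
    ∃ v : ZMod k → α, Injective v ∧ ∀ i, G.Adj (v i) (v (i + 1)) := by
  have : NeZero k := ⟨by omega⟩
  obtain ⟨w, hw0, hwb, hinj, hadj, -⟩ := G.exists_path_avoiding hG (k - 1) (by omega) a b ∅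
    hab (notMem_empty a) (notMem_empty b) (by simp; omega)
  have hval : ∀ i : ZMod k, i.val ≤ k - 1 := fun i => Nat.le_sub_one_of_lt i.val_lt
  refine ⟨fun i => w i.val, fun i j hij => ZMod.val_injective k (hinj (hval i) (hval j) hij),
    fun i => ?_⟩
  have hsucc : (i + 1).val = (i.val + 1) % k := by rw [ZMod.val_add, ZMod.val_one'' (by omega)]
  dsimp only
  by_cases hi : i.val + 1 < k
  · rw [hsucc, Nat.mod_eq_of_lt hi]
    exact hadj _ (by omega)
  · rw [hsucc, show i.val + 1 = k by have := i.val_lt; omega, Nat.mod_self, hw0,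
      show i.val = k - 1 by have := i.val_lt; omega, hwb]
    exact hab.symm

end SimpleGraphCycle

def twoShadow {α : Type*} (H : Finset (Finset α)) : SimpleGraph α where
  Adj x y := x ≠ y ∧ ∃ h ∈ H, x ∈ h ∧ y ∈ h
  symm := ⟨fun _ _ ⟨hxy, h, hh, hx, hy⟩ => ⟨hxy.symm, h, hh, hy, hx⟩⟩
  loopless := ⟨fun _ h => h.1 rfl⟩

lemma twoShadow_adj {α : Type*} {H : Finset (Finset α)} {x y : α} :
    (twoShadow H).Adj x y ↔ x ≠ y ∧ ∃ h ∈ H, x ∈ h ∧ y ∈ h :=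
  Iff.rfl

section Shadow

variable {α : Type*} [DecidableEq α]

lemma PairCodegreeGE.le_codegree {K : ℕ} {H : Finset (Finset α)} (hK : PairCodegreeGE K H)
    {x y : α} (hxy : (twoShadow H).Adj x y) : K ≤ codegree H {x, y} := by
  obtain ⟨hne, h, hh, hx, hy⟩ := twoShadow_adj.1 hxy
  exact hK h hh _
    (mem_powersetCard.2 ⟨insert_subset hx (singleton_subset_iff.2 hy), card_pair hne⟩)

lemma twoShadow_exists_common_adj {H : Finset (Finset α)} {K D m : ℕ}
    (hH : ∀ h ∈ H, 2 < #h) (hD : ∀ U, #U = 3 → codegree H U ≤ D) (hK : PairCodegreeGE K H)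
    (hmK : m * D < K) (x y : α) (hxy : (twoShadow H).Adj x y) (F : Finset α) (hF : #F ≤ m) :
    ∃ c ∉ F, (twoShadow H).Adj x c ∧ (twoShadow H).Adj c y := by
  have hT : #({x, y} : Finset α) = 2 := card_pair hxy.ne
  have hFK : #F * D < codegree H {x, y} :=
    (Nat.mul_le_mul_right D hF).trans_lt (hmK.trans_le (hK.le_codegree hxy))
  obtain ⟨h, hH', hxyh, hFh⟩ :=
    exists_mem_inter_subset_of_card_mul_lt (fun U hU => hD U (by rw [hU, hT])) F hFK
  obtain ⟨c, hc, hcxy⟩ := exists_mem_notMem_of_card_lt_card (hT ▸ hH h hH')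
  have hcF : c ∉ F := fun hcF => hcxy (hFh (mem_inter.2 ⟨hc, hcF⟩))
  rw [mem_insert, mem_singleton, not_or] at hcxy
  exact ⟨c, hcF, twoShadow_adj.2 ⟨Ne.symm hcxy.1, h, hH', hxyh (mem_insert_self _ _), hc⟩,
    twoShadow_adj.2 ⟨hcxy.2, h, hH', hc, hxyh (mem_insert_of_mem (mem_singleton_self _))⟩⟩

/-- Greedy choice, one pair at a time: the edges through a pair that meet the vertices used so
far outside the pair number at most `D` per used vertex. -/
lemma exists_edges_pairwise_inter_subset {ι : Type*} [Fintype ι] [DecidableEq ι]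
    {H : Finset (Finset α)} {r D : ℕ} (hH : ∀ h ∈ H, #h ≤ r)
    (hD : ∀ U, #U = 3 → codegree H U ≤ D) (p : ι → Finset α) (hp : ∀ i, #(p i) = 2)
    (hK : ∀ i, Fintype.card ι * (r + 2) * D < codegree H (p i)) :
    ∃ e : ι → Finset α, ∀ i, e i ∈ H ∧ p i ⊆ e i ∧ ∀ j ≠ i, e i ∩ e j ⊆ p i ∩ p j := by
  set S := univ.biUnion p
  have hS : #S ≤ Fintype.card ι * 2 := card_biUnion_le_card_mul _ _ _ fun i _ => (hp i).le
  suffices ∀ I : Finset ι, ∃ e : ι → Finset α,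
      (∀ i ∈ I, e i ∈ H ∧ p i ⊆ e i ∧ e i ∩ S ⊆ p i) ∧
        (I : Set ι).Pairwise fun i j => e i ∩ e j ⊆ p i ∩ p j by
    obtain ⟨e, he, hpair⟩ := this univ
    exact ⟨e, fun i => ⟨(he i (mem_univ i)).1, (he i (mem_univ i)).2.1,
      fun j hji => hpair (mem_univ i) (mem_univ j) hji.symm⟩⟩
  intro I
  induction I using Finset.induction_on with
  | empty => exact ⟨fun _ => ∅, by simp⟩
  | insert t I htI ih =>
    obtain ⟨e, he, hpair⟩ := ih
    set W := S ∪ I.biUnion e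
    have hW : #W ≤ Fintype.card ι * (r + 2) := by
      have hI : #(I.biUnion e) ≤ #I * r :=
        card_biUnion_le_card_mul _ _ _ fun i hi => hH _ (he i hi).1
      have := Nat.mul_le_mul_right r (card_le_univ I)
      have := card_union_le S (I.biUnion e)
      nlinarith
    obtain ⟨h, hH', hph, hhW⟩ := exists_mem_inter_subset_of_card_mul_lt
      (fun U hU => hD U (by rw [hU, hp])) W ((Nat.mul_le_mul_right D hW).trans_lt (hK t))
    have hnew : ∀ j ∈ I, h ∩ e j ⊆ p t ∩ p j := by
      intro j hj x hx
      rw [mem_inter] at hx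
      have hxt : x ∈ p t :=
        hhW (mem_inter.2 ⟨hx.1, mem_union_right _ (mem_biUnion.2 ⟨j, hj, hx.2⟩)⟩)
      have hxS : x ∈ S := mem_biUnion.2 ⟨t, mem_univ _, hxt⟩
      exact mem_inter.2 ⟨hxt, (he j hj).2.2 (mem_inter.2 ⟨hx.2, hxS⟩)⟩
    have hupd : ∀ j ∈ I, update e t h j = e j := fun j hj =>
      update_of_ne (ne_of_mem_of_not_mem hj htI) _ _
    refine ⟨update e t h, fun i hi => ?_, ?_⟩
    · rcases mem_insert.1 hi with rfl | hi
      · rw [update_self]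
        exact ⟨hH', hph, (inter_subset_inter_left subset_union_left).trans hhW⟩
      · rw [hupd i hi]
        exact he i hi
    · rw [coe_insert, Set.pairwise_insert]
      refine ⟨fun i hi j hj hij => ?_, fun j hj _ => ?_⟩
      · dsimp only
        rw [hupd i hi, hupd j hj]
        exact hpair hi hj hij
      · rw [update_self, hupd j hj, inter_comm (e j), inter_comm (p j)]
        exact ⟨hnew j hj, hnew j hj⟩

end Shadow

lemma hasLooseCycle_of_pairwise_inter_subset {k : ℕ} (hk : 3 ≤ k) {G : Finset (Finset ℕ)}
    {v : ZMod k → ℕ} (hv : Injective v) {e : ZMod k → Finset ℕ} (heG : ∀ i, e i ∈ G)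
    (he : ∀ i, 2 < #(e i)) (hve : ∀ i, {v i, v (i + 1)} ⊆ e i)
    (hee : ∀ i j, i ≠ j → e i ∩ e j ⊆ {v i, v (i + 1)} ∩ {v j, v (j + 1)}) :
    HasLooseCycle k G := by
  have hshift : ∀ (i : ZMod k) (n : ℕ), 0 < n → n < k → i ≠ i + n := by
    intro i n hn0 hnk h
    rw [left_eq_add, ZMod.natCast_eq_zero_iff] at h
    exact absurd (Nat.le_of_dvd hn0 h) (by omega)
  have h1 : ∀ i : ZMod k, i ≠ i + 1 := fun i => by
    simpa using hshift i 1 one_pos (by omega)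
  have h2 : ∀ i : ZMod k, i ≠ i + 1 + 1 := fun i => by
    simpa [add_assoc, one_add_one_eq_two] using hshift i 2 two_pos (by omega)
  refine ⟨e, fun i => v (i + 1), fun i j hij => ?_, hv.comp (add_left_injective 1), heG,
    fun i => ?_, fun i j hji hj hi => ?_⟩
  · by_contra hne
    have hsub : e i ⊆ {v i, v (i + 1)} := by
      simpa [hij] using (hee i j hne).trans inter_subset_left
    exact absurd ((card_le_card hsub).trans (card_le_two)) (by have := he i; omega)
  · refine (subset_antisymm ((hee i (i + 1) (h1 i)).trans ?_) ?_)
    · intro x hx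
      simp only [mem_inter, mem_insert, mem_singleton] at hx ⊢
      grind [hv.eq_iff]
    · exact singleton_subset_iff.2 (mem_inter.2 ⟨hve i (by simp), hve (i + 1) (by simp)⟩)
  · refine subset_empty.1 ((hee i j hji.symm).trans fun x hx => ?_)
    simp only [mem_inter, mem_insert, mem_singleton] at hx
    grind [hv.eq_iff]

section Partite

variable {α ι : Type*} [DecidableEq α] [Fintype ι] {V : ι → Finset α}

lemma card_eq_sum_card_inter (hV : Pairwise (Disjoint on V)) {T : Finset α}
    (hT : T ⊆ univ.biUnion V) : #T = ∑ i, #(T ∩ V i) := by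
  rw [← card_biUnion, ← inter_biUnion, inter_eq_left.2 hT]
  intro i _ j _ hij
  exact (hV hij).mono inter_subset_right inter_subset_right

lemma subset_biUnion_of_card_inter_eq_one (hV : Pairwise (Disjoint on V)) {e : Finset α}
    (he : #e = Fintype.card ι) (heV : ∀ i, #(e ∩ V i) = 1) : e ⊆ univ.biUnion V := by
  have hpart : ∀ i, e ∩ univ.biUnion V ∩ V i = e ∩ V i := fun i => by
    rw [inter_assoc, inter_eq_right.2 (subset_biUnion_of_mem V (mem_univ i))]
  have hcard : #(e ∩ univ.biUnion V) = #e := by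
    simp [card_eq_sum_card_inter hV inter_subset_right, hpart, heV, he]
  exact inter_eq_left.1 (eq_of_subset_of_card_le inter_subset_left hcard.ge)

/-- An edge through `T` is determined by its vertices in the parts that `T` misses. -/
lemma codegree_le_pow_of_partite [DecidableEq ι] (hV : Pairwise (Disjoint on V)) {s : ℕ}
    (hs : ∀ i, #(V i) = s)
    {G : Finset (Finset α)} (hG : ∀ e ∈ G, #e = Fintype.card ι ∧ ∀ i, #(e ∩ V i) = 1)
    (T : Finset α) : codegree G T ≤ s ^ (Fintype.card ι - #T) := by
  rcases (G.filter (T ⊆ ·)).eq_empty_or_nonempty with hempty | ⟨e₀, he₀⟩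
  · simp [codegree, hempty]
  rw [mem_filter] at he₀
  have hcover : ∀ e ∈ G, e ⊆ univ.biUnion V := fun e he =>
    subset_biUnion_of_card_inter_eq_one hV (hG e he).1 (hG e he).2
  have hfixed : ∀ e ∈ G, T ⊆ e → ∀ i, ¬Disjoint T (V i) → e ∩ V i = T ∩ V i := by
    intro e he hTe i hTi
    refine (eq_of_subset_of_card_le (inter_subset_inter_right hTe) ?_).symm
    rw [(hG e he).2 i]
    exact card_pos.2 (not_disjoint_iff_nonempty_inter.1 hTi)
  have hmissed : ∀ i, (if Disjoint T (V i) then 1 else 0) + #(T ∩ V i) = 1 := by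
    intro i
    split_ifs with hTi
    · simp [disjoint_iff_inter_eq_empty.1 hTi]
    · rw [← hfixed e₀ he₀.1 he₀.2 i hTi, (hG e₀ he₀.1).2 i]
  have hexp : ∑ i, (if Disjoint T (V i) then 1 else 0) = Fintype.card ι - #T := by
    have := sum_congr rfl fun i (_ : i ∈ univ) => hmissed i
    simp only [sum_add_distrib, ← card_eq_sum_card_inter hV (he₀.2.trans (hcover e₀ he₀.1)),
      sum_const, card_univ, smul_eq_mul, mul_one] at this
    omega
  let t : ι → Finset (Finset α) := fun i =>
    if Disjoint T (V i) then (V i).powersetCard 1 else {T ∩ V i}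
  have hmaps : Set.MapsTo (fun e i => e ∩ V i) (G.filter (T ⊆ ·) : Set (Finset α))
      (Fintype.piFinset t : Set (ι → Finset α)) := by
    intro e he
    rw [coe_filter] at he
    rw [mem_coe, Fintype.mem_piFinset]
    intro i
    by_cases hTi : Disjoint T (V i)
    · simp [t, hTi, mem_powersetCard, (hG e he.1).2 i]
    · simp [t, hTi, hfixed e he.1 he.2 i hTi]
  have hinj : Set.InjOn (fun e i => e ∩ V i) (G.filter (T ⊆ ·) : Set (Finset α)) := by
    intro e he e' he' hee'
    rw [coe_filter] at he he'
    rw [← inter_eq_left.2 (hcover e he.1), ← inter_eq_left.2 (hcover e' he'.1), inter_biUnion,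
      inter_biUnion]
    exact biUnion_congr rfl fun i _ => congrFun hee' i
  calc codegree G T ≤ #(Fintype.piFinset t) := card_le_card_of_injOn _ hmaps hinj
    _ = ∏ i, s ^ (if Disjoint T (V i) then 1 else 0) := by
      rw [Fintype.card_piFinset]
      refine prod_congr rfl fun i _ => ?_
      by_cases hTi : Disjoint T (V i) <;> simp [t, hTi, hs]
    _ = s ^ (Fintype.card ι - #T) := by rw [prod_pow_eq_pow_sum, hexp]

end Partite

theorem hasLooseCycle_of_codegree_le {r k D : ℕ} (hr : 3 ≤ r) (hk : 3 ≤ k)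
    {G : Finset (Finset ℕ)} (hG : ∀ e ∈ G, #e = r) (hD : ∀ U, #U = 3 → codegree G U ≤ D)
    {P : Finset (Finset ℕ)} (hP : ∀ e ∈ G, e.powersetCard 2 ⊆ P)
    (hcard : (k * (r + 2) * D + 1) * #P < #G) : HasLooseCycle k G := by
  have : NeZero k := ⟨by omega⟩
  set K := k * (r + 2) * D + 1
  obtain ⟨H, hHG, hK, hGH⟩ := exists_subset_pairCodegreeGE K P G hP
  have hHr : ∀ h ∈ H, #h = r := fun h hh => hG h (hHG hh)
  have hHD : ∀ U, #U = 3 → codegree H U ≤ D := fun U hU =>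
    (codegree_mono hHG U).trans (hD U hU)
  obtain ⟨h₀, hh₀⟩ : H.Nonempty := card_pos.1 (by omega)
  obtain ⟨a, ha, b, hb, hab⟩ := one_lt_card.1 (show 1 < #h₀ by rw [hHr h₀ hh₀]; omega)
  have hmK : (k - 1) * D < K := Nat.lt_succ_of_le <|
    Nat.mul_le_mul_right D ((k.sub_le 1).trans (Nat.le_mul_of_pos_right k (by omega)))
  obtain ⟨v, hv, hvadj⟩ := (twoShadow H).exists_cycle (k := k)
    (twoShadow_exists_common_adj (fun h hh => by rw [hHr h hh]; omega) hHD hK hmK)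
    (by omega) (by omega) (twoShadow_adj.2 ⟨hab, h₀, hh₀, ha, hb⟩)
  obtain ⟨e, he⟩ := exists_edges_pairwise_inter_subset (fun h hh => (hHr h hh).le) hHD
    (fun i => {v i, v (i + 1)}) (fun i => card_pair (hvadj i).ne)
    (fun i => by rw [ZMod.card]; exact hK.le_codegree (hvadj i))
  exact hasLooseCycle_of_pairwise_inter_subset hk hv (fun i => hHG (he i).1)
    (fun i => by rw [hHr _ (he i).1]; omega) (fun i => (he i).2.1)
    fun i j hij => (he i).2.2 j hij.symm

lemma hasLooseCycle_of_partite {r k s : ℕ} (hr : 3 ≤ r) (hk : 3 ≤ k) {V : Fin r → Finset ℕ}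
    (hV : ∀ i, #(V i) = s) (hdisj : Pairwise (Disjoint on V)) {G : Finset (Finset ℕ)}
    (hG : ∀ e ∈ G, #e = r ∧ ∀ i, #(e ∩ V i) = 1)
    (hcard : r ^ 2 * (k * (r + 2) + 1) * s ^ (r - 1) < #G) : HasLooseCycle k G := by
  have hG' : ∀ e ∈ G, #e = Fintype.card (Fin r) ∧ ∀ i, #(e ∩ V i) = 1 := by
    simpa only [Fintype.card_fin] using hG
  set U := univ.biUnion V
  have hU : #U ≤ r * s := by simpa [hV] using card_biUnion_le (s := univ) (t := V)
  refine hasLooseCycle_of_codegree_le hr hk (D := s ^ (r - 3)) (P := U.powersetCard 2)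
    (fun e he => (hG e he).1)
    (fun T hT => by simpa [hT] using codegree_le_pow_of_partite hdisj hV hG' T)
    (fun e he => powersetCard_mono
      (subset_biUnion_of_card_inter_eq_one hdisj (hG' e he).1 (hG' e he).2)) ?_
  have hP : #(U.powersetCard 2) ≤ (r * s) ^ 2 := by
    rw [card_powersetCard]
    exact (Nat.choose_le_pow _ _).trans (Nat.pow_le_pow_left hU 2)
  have hs : s ^ 2 ≤ s ^ (r - 1) := by
    rcases Nat.eq_zero_or_pos s with rfl | hs
    · simp
    · exact Nat.pow_le_pow_right hs (by omega)
  have hsplit : s ^ (r - 1) = s ^ (r - 3) * s ^ 2 := by rw [← pow_add]; congr 1; omega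
  calc (k * (r + 2) * s ^ (r - 3) + 1) * #(U.powersetCard 2)
      ≤ (k * (r + 2) * s ^ (r - 3) + 1) * (r * s) ^ 2 := Nat.mul_le_mul_left _ hP
    _ = r ^ 2 * (k * (r + 2)) * s ^ (r - 1) + r ^ 2 * s ^ 2 := by rw [hsplit]; ring
    _ ≤ r ^ 2 * (k * (r + 2)) * s ^ (r - 1) + r ^ 2 * s ^ (r - 1) := by gcongr
    _ = r ^ 2 * (k * (r + 2) + 1) * s ^ (r - 1) := by ring
    _ < #G := hcard

/-- For `r, k ≥ 3` there is `c > 0` (one may take `c = ⌊k/2⌋·r^(r-1)/(r-1)!`) such that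
every `r`-partite `r`-graph with parts of size `s` and more than `c·s^(r-1)` edges
contains a loose `k`-cycle. -/
theorem partite_turan_loose_cycle (r k : ℕ) (hr : 3 ≤ r) (hk : 3 ≤ k) :
    ∃ c : ℝ, 0 < c ∧
      ∀ (s : ℕ) (V : Fin r → Finset ℕ) (G : Finset (Finset ℕ)),
        (∀ i, (V i).card = s) →
        (∀ i j, i ≠ j → Disjoint (V i) (V j)) →
        (∀ e ∈ G, e.card = r ∧ ∀ i, (e ∩ V i).card = 1) →
        c * (s : ℝ) ^ (r - 1) < (G.card : ℝ) →
        HasLooseCycle k G := by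
  refine ⟨(r ^ 2 * (k * (r + 2) + 1) : ℕ), by positivity, fun s V G hV hdisj hG hcard => ?_⟩
  exact hasLooseCycle_of_partite hr hk hV (fun i j => hdisj i j) hG (by exact_mod_cast hcard)
end

section
/- Let h ≥ 1 be an integer. Every nonempty graph with minimum degree at least h+1 contains a cycle whose length is congruent to 2 modulo h. -/
/-!
Take a longest path starting at a vertex `u`. By maximality every neighbour of `u` lies on the
path, and since `u` has more than `h` of them, two sit at positions `a < b` with `a ≡ b (mod h)`.
The edges from `u` to these two close the segment of the path between them into a cycle of
length `b - a + 2 ≡ 2 (mod h)`.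
-/

namespace SimpleGraph

variable {V : Type*} {G : SimpleGraph V}

namespace Walk

theorem exists_isPath_forall_adj_mem_support [Nonempty V] [Finite G.edgeSet] :
    ∃ (u v : V) (p : G.Walk u v), p.IsPath ∧ ∀ w, G.Adj u w → w ∈ p.support := by
  obtain ⟨u, v, p, hp, hmax⟩ := exists_isPath_forall_isPath_length_le_length G
  refine ⟨u, v, p, hp, fun w huw => ?_⟩
  by_contra hw
  have := hmax w v (.cons huw.symm p) (hp.cons hw)
  simp at this

theorem IsCycle.exists_injective_zmod {u : V} {c : G.Walk u u} (hc : c.IsCycle) :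
    ∃ x : ZMod c.length → V, Function.Injective x ∧ ∀ i, G.Adj (x i) (x (i + 1)) := by
  have hL := hc.three_le_length
  have : NeZero c.length := ⟨by omega⟩
  refine ⟨fun i => c.getVert i.val, fun i j hij => ZMod.val_injective _ ?_, fun i => ?_⟩
  · have := ZMod.val_lt i
    have := ZMod.val_lt j
    exact hc.getVert_injOn' (by simp only [Set.mem_ofPred_eq]; omega)
      (by simp only [Set.mem_ofPred_eq]; omega) hij
  · have hi := ZMod.val_lt i
    have hsucc : (i + 1).val = (i.val + 1) % c.length := by
      rw [ZMod.val_add, ZMod.val_one_eq_one_mod, Nat.mod_eq_of_lt (by omega : 1 < c.length)]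
    show G.Adj (c.getVert i.val) (c.getVert (i + 1).val)
    rcases Nat.lt_or_ge (i.val + 1) c.length with hlt | hge
    · rw [hsucc, Nat.mod_eq_of_lt hlt]
      exact c.adj_getVert_succ hi
    · have hlast : i.val + 1 = c.length := by omega
      rw [hsucc, hlast, Nat.mod_self, getVert_zero]
      simpa [hlast] using c.adj_getVert_succ hi

theorem IsPath.exists_isCycle_of_adj_getVert {u v : V} {p : G.Walk u v} (hp : p.IsPath)
    {a b : ℕ} (hab : a < b) (hb : b ≤ p.length) (ha : G.Adj u (p.getVert a))
    (hb' : G.Adj u (p.getVert b)) :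
    ∃ c : G.Walk u u, c.IsCycle ∧ c.length = b - a + 2 := by
  set r := (p.drop a).take (b - a)
  have hr : G.Adj ((p.drop a).getVert (b - a)) u := by
    rwa [drop_getVert, Nat.add_sub_cancel' hab.le, adj_comm]
  have ha0 : a ≠ 0 := by
    rintro rfl
    exact G.irrefl (p.getVert_zero ▸ ha)
  have hu : u ∉ r.support := by
    rw [mem_support_iff_exists_getVert]
    rintro ⟨n, hn, -⟩
    rw [take_getVert, drop_getVert] at hn
    have := hp.getVert_injOn (by simp only [Set.mem_ofPred_eq]; omega) (by simp)
      (hn.trans p.getVert_zero.symm)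
    omega
  have hlen : (cons ha (r.concat hr)).length = b - a + 2 := by
    simp only [r, length_cons, length_concat, take_length, drop_length]
    omega
  refine ⟨cons ha (r.concat hr), ?_, hlen⟩
  rw [isCycle_iff_isPath_tail_and_le_length, hlen, tail_cons]
  exact ⟨(isPath_copy _ _ _).mpr (((hp.drop a).take _).concat hu hr), by omega⟩

theorem exists_adj_getVert_modEq [Fintype V] [DecidableRel G.Adj] {u v : V} (p : G.Walk u v)
    (hnbr : ∀ w, G.Adj u w → w ∈ p.support) {h : ℕ} (hh : 0 < h) (hdeg : h < G.degree u) :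
    ∃ a b, a < b ∧ b ≤ p.length ∧ a ≡ b [MOD h] ∧ G.Adj u (p.getVert a) ∧
      G.Adj u (p.getVert b) := by
  classical
  set S := (Finset.range (p.length + 1)).filter fun i => G.Adj u (p.getVert i)
  have hS : G.degree u ≤ S.card := by
    have hsub : G.neighborFinset u ⊆ S.image p.getVert := fun w hw => by
      rw [mem_neighborFinset] at hw
      obtain ⟨n, rfl, hn⟩ := mem_support_iff_exists_getVert.mp (hnbr w hw)
      exact Finset.mem_image_of_mem _ (by simp [S, hw]; omega)
    rw [← card_neighborFinset_eq_degree]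
    exact (Finset.card_le_card hsub).trans Finset.card_image_le
  obtain ⟨i, hi, j, hj, hij, hmod⟩ := Finset.exists_ne_map_eq_of_card_lt_of_maps_to
    (t := Finset.range h) (f := (· % h)) (by simpa using hdeg.trans_le hS)
    (fun i _ => by simpa using Nat.mod_lt i hh)
  simp only [S, Finset.mem_filter, Finset.mem_range] at hi hj
  rcases Nat.lt_or_gt_of_ne hij with hlt | hlt
  · exact ⟨i, j, hlt, by omega, hmod, hi.2, hj.2⟩
  · exact ⟨j, i, hlt, by omega, hmod.symm, hj.2, hi.2⟩

end Walk

end SimpleGraph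

open SimpleGraph

/-- Every nonempty graph with minimum degree at least `h+1` contains a cycle whose
length is congruent to `2` modulo `h`. -/
theorem cycle_two_mod_h_of_min_degree {V : Type*} [Fintype V] [Nonempty V]
    (h : ℕ) (hh : 1 ≤ h)
    (F : SimpleGraph V) [DecidableRel F.Adj]
    (hdeg : ∀ v : V, h + 1 ≤ F.degree v) :
    ∃ m : ℕ, 3 ≤ m ∧ m % h = 2 % h ∧
      ∃ x : ZMod m → V, Function.Injective x ∧ ∀ i, F.Adj (x i) (x (i + 1)) := by
  obtain ⟨u, v, p, hp, hnbr⟩ := Walk.exists_isPath_forall_adj_mem_support (G := F)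
  obtain ⟨a, b, hab, hb, hmod, ha, hb'⟩ := p.exists_adj_getVert_modEq hnbr hh (hdeg u)
  obtain ⟨c, hc, hlen⟩ := hp.exists_isCycle_of_adj_getVert hab hb ha hb'
  refine ⟨c.length, hc.three_le_length, ?_, hc.exists_injective_zmod⟩
  have hdvd : h ∣ b - a := (Nat.modEq_iff_dvd' hab.le).mp hmod
  rw [hlen]
  exact (Nat.modEq_zero_iff_dvd.mpr hdvd).add_right 2
end

section
/- Let l ≥ 2 and s, t ≥ 1 be integers, and let G = K_{s,t} be an edge-colored complete bipartite graph with vertex set V(G) ⊆ [n] (each edge e colored by z_e ∈ [n] \ e). If G contains a strongly rainbow colored cycle of length congruent to 2 modulo 2l−2, then G contains a strongly rainbow colored cycle of length exactly 2l. -/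
/-- The edge set of the complete bipartite graph with parts `A` and `B`. -/
def completeBipartiteEdges (A B : Finset ℕ) : Finset (Finset ℕ) :=
  (A ×ˢ B).image fun p => ({p.1, p.2} : Finset ℕ)

/-- An edge-colored graph `G` (with coloring `χ`) contains a strongly rainbow colored
cycle of length `m`. -/
def HasStronglyRainbowCycle (m : ℕ) (G : Finset (Finset ℕ)) (χ : Finset ℕ → ℕ) : Prop :=
  ∃ x : ZMod m → ℕ, Function.Injective x ∧
    (∀ i, ({x i, x (i + 1)} : Finset ℕ) ∈ G) ∧
    (Function.Injective fun i => χ ({x i, x (i + 1)} : Finset ℕ)) ∧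
    (∀ i j, χ ({x i, x (i + 1)} : Finset ℕ) ≠ x j)

/-!
Write the cycle as `x 0, …, x (m - 1)` with `m = (2l - 2)(q + 1) + 2`. Since `2l - 1` is odd,
`x 0` and `x (2l - 1)` lie in different parts of `K_{s,t}`, so they span a chord `e`, which cuts
the cycle into a `2l`-cycle and an `(m - 2l + 2)`-cycle through `e`. The colour `z_e` cannot spoil
both: a clash on either side is with an edge colour or a vertex of that side, and the strong
rainbow property of the original cycle makes these differ from everything on the other side.
Induction on `q` finishes the proof.
-/

lemma pair_mem_completeBipartiteEdges {A B : Finset ℕ} {u v : ℕ} :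
    ({u, v} : Finset ℕ) ∈ completeBipartiteEdges A B ↔ u ∈ A ∧ v ∈ B ∨ v ∈ A ∧ u ∈ B := by
  simp only [completeBipartiteEdges, Finset.mem_image, Finset.mem_product, Prod.exists,
    ← Finset.coe_inj, Finset.coe_pair, Set.pair_eq_pair_iff]
  constructor
  · rintro ⟨a, b, ⟨ha, hb⟩, ⟨rfl, rfl⟩ | ⟨rfl, rfl⟩⟩
    exacts [Or.inl ⟨ha, hb⟩, Or.inr ⟨ha, hb⟩]
  · rintro (⟨hu, hv⟩ | ⟨hv, hu⟩)
    exacts [⟨u, v, ⟨hu, hv⟩, Or.inl ⟨rfl, rfl⟩⟩, ⟨v, u, ⟨hv, hu⟩, Or.inr ⟨rfl, rfl⟩⟩]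

lemma mem_left_iff_even_of_walk {A B : Finset ℕ} (hAB : Disjoint A B) {y : ℕ → ℕ} {k : ℕ}
    (hy : ∀ i < k, ({y i, y (i + 1)} : Finset ℕ) ∈ completeBipartiteEdges A B) :
    ∀ i ≤ k, ((y i ∈ A ↔ y 0 ∈ A) ↔ Even i) := by
  intro i hi
  induction i with
  | zero => simp
  | succ i ih =>
    have hstep : y (i + 1) ∈ A ↔ y i ∉ A := by
      have := Finset.disjoint_left.mp hAB
      rcases pair_mem_completeBipartiteEdges.mp (hy i (by omega)) with ⟨h, h'⟩ | ⟨h, h'⟩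
      · exact iff_of_false (this · h') (not_not.mpr h)
      · exact iff_of_true h (this · h')
    rw [hstep, Nat.even_add_one, ← ih (by omega)]
    tauto

lemma pair_mem_completeBipartiteEdges_of_odd {A B : Finset ℕ} (hAB : Disjoint A B)
    {y : ℕ → ℕ} {k : ℕ}
    (hy : ∀ i < k, ({y i, y (i + 1)} : Finset ℕ) ∈ completeBipartiteEdges A B)
    {a : ℕ} (hak : a ≤ k) (ha : Odd a) :
    ({y a, y 0} : Finset ℕ) ∈ completeBipartiteEdges A B := by
  have hside := mem_left_iff_even_of_walk hAB hy a hak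
  rw [← Nat.not_odd_iff_even, iff_false_intro (not_not.mpr ha)] at hside
  obtain ⟨r, rfl⟩ := ha
  have h0 := pair_mem_completeBipartiteEdges.mp (hy 0 (by omega))
  have ha' := pair_mem_completeBipartiteEdges.mp (hy (2 * r) (by omega))
  have := Finset.disjoint_left.mp hAB
  rw [pair_mem_completeBipartiteEdges]
  tauto

/-- `HasStronglyRainbowCycle` with the cycle listed over `ℕ` rather than `ZMod m`:
`y 0, …, y (m - 1)`, with `y m = y 0` closing it up. -/
structure IsStronglyRainbowCycleSeq (G : Finset (Finset ℕ)) (χ : Finset ℕ → ℕ) (m : ℕ)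
    (y : ℕ → ℕ) : Prop where
  closed : y m = y 0
  injOn : Set.InjOn y (Set.Iio m)
  edge_mem : ∀ i < m, ({y i, y (i + 1)} : Finset ℕ) ∈ G
  color_injOn : Set.InjOn (fun i => χ {y i, y (i + 1)}) (Set.Iio m)
  color_ne : ∀ i < m, ∀ j < m, χ {y i, y (i + 1)} ≠ y j

namespace IsStronglyRainbowCycleSeq

variable {G : Finset (Finset ℕ)} {χ : Finset ℕ → ℕ} {m : ℕ} {y : ℕ → ℕ}

lemma apply_mod (hy : IsStronglyRainbowCycleSeq G χ m y) {j : ℕ} (hj : j ≤ m) :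
    y (j % m) = y j := by
  rcases hj.lt_or_eq with hj | rfl
  · rw [Nat.mod_eq_of_lt hj]
  · rw [Nat.mod_self, hy.closed]

lemma color_ne_of_le (hy : IsStronglyRainbowCycleSeq G χ m y) {i j : ℕ} (hi : i < m)
    (hj : j ≤ m) : χ {y i, y (i + 1)} ≠ y j := by
  rw [← hy.apply_mod hj]
  exact hy.color_ne i hi _ (Nat.mod_lt _ (by omega))

lemma injOn_Icc (hy : IsStronglyRainbowCycleSeq G χ m y) {s t : ℕ} (ht : t ≤ m)
    (hproper : 0 < s ∨ t < m) : Set.InjOn y (Set.Icc s t) := by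
  intro i ⟨hsi, hit⟩ j ⟨hsj, hjt⟩ hij
  rw [← hy.apply_mod (hit.trans ht), ← hy.apply_mod (hjt.trans ht)] at hij
  have := hy.injOn (Nat.mod_lt i (by omega)) (Nat.mod_lt j (by omega)) hij
  rcases (hit.trans ht).lt_or_eq with hi | rfl <;> rcases (hjt.trans ht).lt_or_eq with hj | rfl
  · rwa [Nat.mod_eq_of_lt hi, Nat.mod_eq_of_lt hj] at this
  · rw [Nat.mod_eq_of_lt hi, Nat.mod_self] at this; omega
  · rw [Nat.mod_eq_of_lt hj, Nat.mod_self] at this; omega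
  · rfl

lemma hasStronglyRainbowCycle [NeZero m] (hy : IsStronglyRainbowCycleSeq G χ m y) :
    HasStronglyRainbowCycle m G χ := by
  have hsucc (i : ZMod m) : y (i + 1).val = y (i.val + 1) := by
    rw [← hy.apply_mod (ZMod.val_lt i), ← ZMod.val_natCast, Nat.cast_succ, ZMod.natCast_zmod_val]
  refine ⟨fun i => y i.val, ?_, ?_, ?_, ?_⟩
  · exact fun i j hij => ZMod.val_injective m (hy.injOn (ZMod.val_lt i) (ZMod.val_lt j) hij)
  · intro i
    simpa only [hsucc] using hy.edge_mem _ (ZMod.val_lt i)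
  · intro i j hij
    simp only [hsucc] at hij
    exact ZMod.val_injective m (hy.color_injOn (ZMod.val_lt i) (ZMod.val_lt j) hij)
  · intro i j
    simpa only [hsucc] using hy.color_ne _ (ZMod.val_lt i) _ (ZMod.val_lt j)

end IsStronglyRainbowCycleSeq

lemma HasStronglyRainbowCycle.exists_seq {m : ℕ} {G : Finset (Finset ℕ)} {χ : Finset ℕ → ℕ}
    (h : HasStronglyRainbowCycle m G χ) : ∃ y, IsStronglyRainbowCycleSeq G χ m y := by
  obtain ⟨x, hinj, hedge, hcolor, hne⟩ := h
  have hsucc (j : ℕ) : x ((j + 1 : ℕ) : ZMod m) = x (j + 1) := by push_cast; rfl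
  refine ⟨fun j => x j, ⟨?_, ?_, ?_, ?_, ?_⟩⟩
  · simp
  · exact fun i hi j hj hij => CharP.natCast_injOn_Iio (ZMod m) m hi hj (hinj hij)
  · intro i _
    simpa only [hsucc] using hedge i
  · intro i hi j hj hij
    simp only [hsucc] at hij
    exact CharP.natCast_injOn_Iio (ZMod m) m hi hj (hcolor hij)
  · intro i _ j _
    simpa only [hsucc] using hne i j

/-- The walk `y s, …, y t` closed up by the chord `{y t, y s}`: from index `t - s + 1` on it
returns to `y s`. -/
def cycleSegment (y : ℕ → ℕ) (s t : ℕ) (i : ℕ) : ℕ := if s + i ≤ t then y (s + i) else y s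

section cycleSegment

variable {y : ℕ → ℕ} {s t i : ℕ}

lemma cycleSegment_of_le (h : s + i ≤ t) : cycleSegment y s t i = y (s + i) := if_pos h

lemma pair_cycleSegment_of_lt (h : s + i < t) :
    ({cycleSegment y s t i, cycleSegment y s t (i + 1)} : Finset ℕ) =
      {y (s + i), y (s + i + 1)} := by
  rw [cycleSegment_of_le h.le, cycleSegment_of_le (by omega), add_assoc]

lemma pair_cycleSegment_of_eq (h : s + i = t) :
    ({cycleSegment y s t i, cycleSegment y s t (i + 1)} : Finset ℕ) = {y t, y s} := by
  rw [cycleSegment_of_le h.le, h, cycleSegment, if_neg (by omega)]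

end cycleSegment

namespace IsStronglyRainbowCycleSeq

variable {G : Finset (Finset ℕ)} {χ : Finset ℕ → ℕ} {m : ℕ} {y : ℕ → ℕ}

lemma segment (hy : IsStronglyRainbowCycleSeq G χ m y) {s t : ℕ} (hst : s ≤ t)
    (htm : t ≤ m) (hproper : 0 < s ∨ t < m) (hchord : ({y t, y s} : Finset ℕ) ∈ G)
    (hχchord : χ {y t, y s} ∉ ({y t, y s} : Finset ℕ))
    (hedge : ∀ i, s ≤ i → i < t → χ {y i, y (i + 1)} ≠ χ {y t, y s})
    (hvert : ∀ j, s < j → j < t → y j ≠ χ {y t, y s}) :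
    IsStronglyRainbowCycleSeq G χ (t - s + 1) (cycleSegment y s t) := by
  have hpair (i : ℕ) (hi : i < t - s + 1) :
      ({cycleSegment y s t i, cycleSegment y s t (i + 1)} : Finset ℕ) =
        if s + i < t then {y (s + i), y (s + i + 1)} else {y t, y s} := by
    split_ifs with h
    exacts [pair_cycleSegment_of_lt h, pair_cycleSegment_of_eq (by omega)]
  have happly (j : ℕ) (hj : j < t - s + 1) : cycleSegment y s t j = y (s + j) :=
    cycleSegment_of_le (by omega)
  refine ⟨?_, ?_, ?_, ?_, ?_⟩
  · rw [happly 0 (by omega), cycleSegment, if_neg (by omega), add_zero]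
  · intro i (hi : i < t - s + 1) j (hj : j < t - s + 1) hij
    rw [happly i hi, happly j hj] at hij
    have := hy.injOn_Icc htm hproper (⟨by omega, by omega⟩ : s + i ∈ Set.Icc s t)
      (⟨by omega, by omega⟩ : s + j ∈ Set.Icc s t) hij
    omega
  · intro i hi
    rw [hpair i hi]
    split_ifs with h
    exacts [hy.edge_mem _ (by omega), hchord]
  · intro i (hi : i < t - s + 1) j (hj : j < t - s + 1) hij
    simp only [hpair i hi, hpair j hj] at hij
    split_ifs at hij with h₁ h₂ h₂
    · have := hy.color_injOn (show s + i < m by omega) (show s + j < m by omega) hij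
      omega
    · exact absurd hij (hedge _ (by omega) h₁)
    · exact absurd hij.symm (hedge _ (by omega) h₂)
    · omega
  · intro i hi j hj
    rw [hpair i hi, happly j hj]
    split_ifs with h
    · exact hy.color_ne_of_le (by omega) (by omega)
    · rcases Nat.eq_zero_or_pos j with rfl | hj0
      · exact fun h' => hχchord (by simp [h'])
      rcases (show s + j ≤ t by omega).lt_or_eq with hjt | hjt
      · exact (hvert _ (by omega) hjt).symm
      · exact fun h' => hχchord (by simp [h', hjt])

lemma split (hy : IsStronglyRainbowCycleSeq G χ m y) {a : ℕ} (ha : 0 < a) (ham : a < m)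
    (hchord : ({y a, y 0} : Finset ℕ) ∈ G) (hχchord : χ {y a, y 0} ∉ ({y a, y 0} : Finset ℕ)) :
    IsStronglyRainbowCycleSeq G χ (a + 1) (cycleSegment y 0 a) ∨
      IsStronglyRainbowCycleSeq G χ (m - a + 1) (cycleSegment y a m) := by
  have hchord' : ({y m, y a} : Finset ℕ) = {y a, y 0} := by rw [hy.closed, Finset.pair_comm]
  by_cases hfresh : (∀ i < a, χ {y i, y (i + 1)} ≠ χ {y a, y 0}) ∧
      ∀ j, 0 < j → j < a → y j ≠ χ {y a, y 0}
  · left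
    simpa using hy.segment (Nat.zero_le a) ham.le (Or.inr ham) hchord hχchord
      (fun i _ hi => hfresh.1 i hi) hfresh.2
  right
  refine hy.segment ham.le le_rfl (Or.inl ha) (hchord' ▸ hchord) (hchord' ▸ hχchord) ?_ ?_
  all_goals
    rw [hchord']
    simp only [not_and_or, not_forall, not_not] at hfresh
    rcases hfresh with ⟨i₀, hi₀, hclash⟩ | ⟨j₀, hj₀, hj₀a, hclash⟩
  · intro i hai him hcol
    have := hy.color_injOn (show i < m by omega) (show i₀ < m by omega) (hcol.trans hclash.symm)
    omega
  · exact fun i hai him hcol => hy.color_ne i him j₀ (by omega) (hcol.trans hclash.symm)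
  · exact fun j haj hjm hcol => hy.color_ne i₀ (by omega) j (by omega) (hclash.trans hcol.symm)
  · intro j haj hjm hcol
    have := hy.injOn (show j < m by omega) (show j₀ < m by omega) (hcol.trans hclash.symm)
    omega

end IsStronglyRainbowCycleSeq

lemma exists_stronglyRainbowCycleSeq_two_mul {l : ℕ} (hl : 1 ≤ l) {A B : Finset ℕ}
    (hAB : Disjoint A B) {χ : Finset ℕ → ℕ} (hχ : ∀ e ∈ completeBipartiteEdges A B, χ e ∉ e)
    {q : ℕ} (hq : 1 ≤ q) {y : ℕ → ℕ}
    (hy : IsStronglyRainbowCycleSeq (completeBipartiteEdges A B) χ ((2 * l - 2) * q + 2) y) :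
    ∃ y', IsStronglyRainbowCycleSeq (completeBipartiteEdges A B) χ (2 * l) y' := by
  induction q, hq using Nat.le_induction generalizing y with
  | base => exact ⟨y, by rwa [show (2 * l - 2) * 1 + 2 = 2 * l by omega] at hy⟩
  | succ q _ ih =>
    have hm : (2 * l - 2) * (q + 1) + 2 = (2 * l - 2) * q + 2 * l := by rw [Nat.mul_succ]; omega
    rw [hm] at hy
    have hchord := pair_mem_completeBipartiteEdges_of_odd hAB hy.edge_mem
      (show 2 * l - 1 ≤ (2 * l - 2) * q + 2 * l by omega) (by use l - 1; omega)
    rcases hy.split (by omega) (by omega) hchord (hχ _ hchord) with hD | hE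
    · exact ⟨_, by rwa [show 2 * l - 1 + 1 = 2 * l by omega] at hD⟩
    · have hm' : (2 * l - 2) * q + 2 * l - (2 * l - 1) + 1 = (2 * l - 2) * q + 2 := by omega
      exact ih (hm' ▸ hE)

lemma exists_eq_mul_add_two_of_mod_eq {d m : ℕ} (hm : 3 ≤ m) (hmod : m % d = 2 % d) :
    ∃ q, 1 ≤ q ∧ m = d * q + 2 := by
  obtain ⟨q, hq⟩ := (Nat.modEq_iff_dvd' (by omega : 2 ≤ m)).mp hmod.symm
  refine ⟨q, Nat.pos_of_ne_zero ?_, by omega⟩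
  rintro rfl
  omega

theorem strongly_rainbow_C2l_of_cycle_two_mod_general (l n : ℕ) (hl : 2 ≤ l)
    (A B : Finset ℕ)
    (hAB : Disjoint A B)
    (G : Finset (Finset ℕ)) (hG : G = completeBipartiteEdges A B)
    (χ : Finset ℕ → ℕ) (hχ : ∀ e ∈ G, χ e ∈ Finset.Icc 1 n ∧ χ e ∉ e)
    (hcyc : ∃ m : ℕ, 3 ≤ m ∧ m % (2 * l - 2) = 2 % (2 * l - 2) ∧
      HasStronglyRainbowCycle m G χ) :
    HasStronglyRainbowCycle (2 * l) G χ := by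
  subst hG
  obtain ⟨m, hm, hmod, hcycle⟩ := hcyc
  obtain ⟨q, hq, rfl⟩ := exists_eq_mul_add_two_of_mod_eq hm hmod
  obtain ⟨y, hy⟩ := hcycle.exists_seq
  obtain ⟨y', hy'⟩ :=
    exists_stronglyRainbowCycleSeq_two_mul (by omega) hAB (fun e he => (hχ e he).2) hq hy
  have : NeZero (2 * l) := ⟨by omega⟩
  exact hy'.hasStronglyRainbowCycle

/-- If an edge-colored `K_{s,t}` with vertices in `[n]` contains a strongly rainbow
colored cycle of length `≡ 2 (mod 2l−2)`, then it contains a strongly rainbow colored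
cycle of length exactly `2l`. -/
theorem strongly_rainbow_C2l_of_cycle_two_mod (l s t n : ℕ) (hl : 2 ≤ l)
    (hs : 1 ≤ s) (ht : 1 ≤ t)
    (A B : Finset ℕ) (hA : A ⊆ Finset.Icc 1 n) (hB : B ⊆ Finset.Icc 1 n)
    (hAB : Disjoint A B) (hAc : A.card = s) (hBc : B.card = t)
    (G : Finset (Finset ℕ)) (hG : G = completeBipartiteEdges A B)
    (χ : Finset ℕ → ℕ) (hχ : ∀ e ∈ G, χ e ∈ Finset.Icc 1 n ∧ χ e ∉ e)
    (hcyc : ∃ m : ℕ, 3 ≤ m ∧ m % (2 * l - 2) = 2 % (2 * l - 2) ∧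
      HasStronglyRainbowCycle m G χ) :
    HasStronglyRainbowCycle (2 * l) G χ :=
  strongly_rainbow_C2l_of_cycle_two_mod_general l n hl A B hAB G hG χ hχ hcyc
end

section
/- For every integer c ≥ 2 and every integer p > c⁴, if G = K_{p,p} is a complete bipartite graph whose edges are colored (with colors from an arbitrary set) such that every color class is a matching, then G contains a rainbow colored copy of K_{c,c}, i.e., there exist c-element subsets X and Y of the two parts such that all c² edges between X and Y receive pairwise distinct colors. -/
/-!
Fix any `c`-subset `X` of one side and build the `c`-subset `Y` of the other side greedily.
If `Y` already spans a rainbow `K_{X,Y}`, a vertex `y` can only spoil it through an edge `xy`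
repeating one of the at most `|X| |Y|` colors used so far; since color classes are matchings,
each `x` and each color rule out at most one `y`, so at most `|X|² |Y|` vertices are excluded,
and two new edges `xy`, `x'y` share the vertex `y`, so they differ in color as well.
-/

open Function Finset

section

variable {α β γ : Type*}

theorem card_filter_exists_mem_le [DecidableEq γ] (f : α → β → γ) {X : Finset α} {B : Finset β}
    (hrow : ∀ x ∈ X, Set.InjOn (f x) B) (C : Finset γ) :
    #{y ∈ B | ∃ x ∈ X, f x y ∈ C} ≤ #X * #C := by
  classical
  calc #{y ∈ B | ∃ x ∈ X, f x y ∈ C}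
      ≤ #(X.biUnion fun x => {y ∈ B | f x y ∈ C}) := by
        refine card_le_card fun y hy => ?_
        obtain ⟨hyB, x, hx, hxy⟩ := mem_filter.1 hy
        exact mem_biUnion.2 ⟨x, hx, mem_filter.2 ⟨hyB, hxy⟩⟩
    _ ≤ #X * #C := card_biUnion_le_card_mul _ _ _ fun x hx =>
        card_le_card_of_injOn (f x) (fun y hy => (mem_filter.1 hy).2)
          ((hrow x hx).mono fun y hy => (mem_filter.1 hy).1)

theorem exists_notMem_injOn_uncurry_insert (f : α → β → γ) {X : Finset α} {Y B : Finset β}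
    (hrow : ∀ x ∈ X, Set.InjOn (f x) B) (hcol : ∀ y ∈ B, Set.InjOn (f · y) X)
    (hY : Set.InjOn (uncurry f) (↑X ×ˢ ↑Y)) (hcard : #Y * (#X ^ 2 + 1) < #B) :
    ∃ y ∈ B, y ∉ Y ∧ Set.InjOn (uncurry f) (↑X ×ˢ insert y ↑Y) := by
  classical
  set C := (X ×ˢ Y).image (uncurry f)
  have hC : #C ≤ #X * #Y := card_product X Y ▸ card_image_le
  set bad := {y ∈ B | ∃ x ∈ X, f x y ∈ C}
  have hbad : #bad ≤ #X ^ 2 * #Y :=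
    calc #bad ≤ #X * (#X * #Y) := (card_filter_exists_mem_le f hrow C).trans (by gcongr)
      _ = #X ^ 2 * #Y := by ring
  obtain ⟨y, hyB, hy⟩ : ∃ y ∈ B, y ∉ Y ∪ bad := by
    by_contra! h
    have := (card_le_card h).trans (card_union_le Y bad)
    nlinarith
  have hy_good : ∀ x ∈ X, ∀ x' ∈ X, ∀ y' ∈ Y, f x y ≠ f x' y' := fun x hx x' hx' y' hy' h =>
    hy (mem_union_right _ (mem_filter.2
      ⟨hyB, x, hx, mem_image.2 ⟨(x', y'), mem_product.2 ⟨hx', hy'⟩, h.symm⟩⟩))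
  refine ⟨y, hyB, fun h => hy (mem_union_left _ h), ?_⟩
  rintro ⟨x₁, y₁⟩ ⟨hx₁, hy₁ : y₁ = y ∨ y₁ ∈ Y⟩ ⟨x₂, y₂⟩ ⟨hx₂, hy₂ : y₂ = y ∨ y₂ ∈ Y⟩
    (h : f x₁ y₁ = f x₂ y₂)
  rcases hy₁ with rfl | hy₁ <;> rcases hy₂ with rfl | hy₂
  · exact Prod.ext (hcol _ hyB hx₁ hx₂ h) rfl
  · exact absurd h (hy_good x₁ hx₁ x₂ hx₂ y₂ hy₂)
  · exact absurd h.symm (hy_good x₂ hx₂ x₁ hx₁ y₁ hy₁)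
  · exact hY ⟨hx₁, hy₁⟩ ⟨hx₂, hy₂⟩ h

/-- With `k = 0` the hypothesis still asks for `B` to be nonempty (truncated subtraction). -/
theorem exists_card_eq_injOn_uncurry (f : α → β → γ) {X : Finset α} {B : Finset β}
    (hrow : ∀ x ∈ X, Set.InjOn (f x) B) (hcol : ∀ y ∈ B, Set.InjOn (f · y) X)
    (k : ℕ) (hk : (k - 1) * (#X ^ 2 + 1) < #B) :
    ∃ Y ⊆ B, #Y = k ∧ Set.InjOn (uncurry f) (↑X ×ˢ ↑Y) := by
  classical
  induction k with
  | zero => exact ⟨∅, empty_subset B, rfl, by simp⟩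
  | succ k ih =>
    have hk' : k * (#X ^ 2 + 1) < #B := by simpa using hk
    obtain ⟨Y, hYB, rfl, hY⟩ :=
      ih (lt_of_le_of_lt (Nat.mul_le_mul_right _ (Nat.sub_le k 1)) hk')
    obtain ⟨y, hyB, hyY, hy⟩ := exists_notMem_injOn_uncurry_insert f hrow hcol hY hk'
    exact ⟨insert y Y, insert_subset hyB hYB, card_insert_of_notMem hyY, by simpa using hy⟩

end

theorem rainbow_Kcc_of_matching_color_classes_general {γ : Type*}
    (c p : ℕ) (hp : c ^ 4 < p)
    (A B : Finset ℕ) (hA : A.card = p) (hB : B.card = p)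
    (χ : Finset ℕ → γ)
    (hmatch : ∀ x ∈ A, ∀ x' ∈ A, ∀ y ∈ B, ∀ y' ∈ B,
      χ ({x, y} : Finset ℕ) = χ ({x', y'} : Finset ℕ) →
        (x = x' ∧ y = y') ∨ (x ≠ x' ∧ y ≠ y')) :
    ∃ X ⊆ A, ∃ Y ⊆ B, X.card = c ∧ Y.card = c ∧
      ∀ x ∈ X, ∀ x' ∈ X, ∀ y ∈ Y, ∀ y' ∈ Y,
        χ ({x, y} : Finset ℕ) = χ ({x', y'} : Finset ℕ) → x = x' ∧ y = y' := by
  obtain ⟨X, hXA, hXc⟩ := exists_subset_card_eq (s := A) (n := c)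
    (hA ▸ (Nat.le_self_pow (by norm_num) c).trans hp.le)
  have hrow : ∀ x ∈ X, Set.InjOn (fun y => χ {x, y}) B := fun x hx y hy y' hy' h =>
    ((hmatch x (hXA hx) x (hXA hx) y hy y' hy' h).resolve_right fun h => h.1 rfl).2
  have hcol : ∀ y ∈ B, Set.InjOn (fun x => χ {x, y}) X := fun y hy x hx x' hx' h =>
    ((hmatch x (hXA hx) x' (hXA hx') y hy y hy h).resolve_right fun h => h.2 rfl).1
  have hcard : (c - 1) * (#X ^ 2 + 1) < #B := by
    rw [hXc, hB]
    refine lt_of_le_of_lt ?_ hp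
    rcases c with _ | n
    · simp
    · simp only [Nat.add_sub_cancel]
      ring_nf
      nlinarith
  obtain ⟨Y, hYB, hYc, hY⟩ := exists_card_eq_injOn_uncurry _ hrow hcol c hcard
  exact ⟨X, hXA, Y, hYB, hXc, hYc, fun x hx x' hx' y hy y' hy' h =>
    Prod.ext_iff.1 (hY (x₁ := (x, y)) (x₂ := (x', y')) ⟨hx, hy⟩ ⟨hx', hy'⟩ h)⟩

/-- If `K_{p,p}` with `p > c⁴` is edge-colored so that every color class is a matching,
then it contains a rainbow colored `K_{c,c}`. -/
theorem rainbow_Kcc_of_matching_color_classes {γ : Type*}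
    (c p : ℕ) (hc : 2 ≤ c) (hp : c ^ 4 < p)
    (A B : Finset ℕ) (hA : A.card = p) (hB : B.card = p) (hAB : Disjoint A B)
    (χ : Finset ℕ → γ)
    (hmatch : ∀ x ∈ A, ∀ x' ∈ A, ∀ y ∈ B, ∀ y' ∈ B,
      χ ({x, y} : Finset ℕ) = χ ({x', y'} : Finset ℕ) →
        (x = x' ∧ y = y') ∨ (x ≠ x' ∧ y ≠ y')) :
    ∃ X ⊆ A, ∃ Y ⊆ B, X.card = c ∧ Y.card = c ∧
      ∀ x ∈ X, ∀ x' ∈ X, ∀ y ∈ Y, ∀ y' ∈ Y,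
        χ ({x, y} : Finset ℕ) = χ ({x', y'} : Finset ℕ) → x = x' ∧ y = y' :=
  rainbow_Kcc_of_matching_color_classes_general c p hp A B hA hB χ hmatch
end

section
/- For every integer l ≥ 2 there exist real numbers ε = ε(l) > 0 (one may take ε = 1/(18l)) and s₀ = s₀(l) > 0 such that the following holds. Let G = K_{s,t} be a complete bipartite graph on parts X and Y with |X| = s, |Y| = t, where s > s₀ and s/log s < t ≤ s, whose edges are colored with colors from an arbitrary set. Then, with q = ⌈s^ε⌉, at least one of the following holds: (i) G contains a rainbow colored K_{4l,4l}; (ii) G contains an edge-colored copy of K_{q,2l} on parts Q and R with |Q| = q and |R| = 2l (where either Q ⊆ X and R ⊆ Y, or Q ⊆ Y and R ⊆ X) that is Q-canonical; (iii) G contains a monochromatic copy of K_{q,2l} on parts Q and R with |Q| = q and |R| = 2l (where either Q ⊆ X and R ⊆ Y, or Q ⊆ Y and R ⊆ X). -/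
/-!
Call a vertex light when every colour class of its star has fewer than `d` edges
(`SmallFibers`), where `d ≈ n ^ (1 - δ)` for the size `n` of the opposite side. If half of `Y`
is heavy, double counting over the `m`-subsets of `X` gives an `m`-set `R` on which more than
`(q - 1)²` vertices of `Y` have monochromatic stars, and pigeonholing their colours on `R` leaves
`q` of them with equal colours (monochromatic) or pairwise distinct ones (canonical). The same
works for `X` against the light half `Y₀` of `Y`. Otherwise the light halves `X₀`, `Y₀` are
used: greedily choosing `k` vertices of `X₀` that each create few new colour collisions leaves
half of `Y₀` seeing `k` distinct colours on them, and among those a rainbow `k`-set is chosen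
greedily again. With `q = ⌈s ^ (1 / (18l))⌉`, `m = 2l`, `k = 4l` and `δ = 1 / (8l)` all counting
conditions hold for large `s`, since `t > s / log s ≥ s ^ (1 - δ / 2)`.
-/

open Finset

namespace BipartiteCanonicalRamsey

variable {α β γ : Type*}

def IsRainbow (c : α → β → γ) (A : Finset α) (B : Finset β) : Prop :=
  ∀ x ∈ A, ∀ x' ∈ A, ∀ y ∈ B, ∀ y' ∈ B, c x y = c x' y' → x = x' ∧ y = y'

def IsCanonical (c : α → β → γ) (A : Finset α) (B : Finset β) : Prop :=
  (∀ x ∈ A, ∀ y ∈ B, ∀ y' ∈ B, c x y = c x y') ∧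
    ∀ x ∈ A, ∀ x' ∈ A, ∀ y ∈ B, ∀ y' ∈ B, x ≠ x' → c x y ≠ c x' y'

def IsMonochromatic (c : α → β → γ) (A : Finset α) (B : Finset β) : Prop :=
  ∀ x ∈ A, ∀ x' ∈ A, ∀ y ∈ B, ∀ y' ∈ B, c x y = c x' y'

section SmallFibers

variable [DecidableEq γ]

def SmallFibers (f : β → γ) (B : Finset β) (d : ℕ) : Prop :=
  ∀ z, #{b ∈ B | f b = z} < d

variable {f : β → γ} {B B' : Finset β} {d : ℕ}

lemma SmallFibers.mono (h : SmallFibers f B d) (hB : B' ⊆ B) : SmallFibers f B' d :=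
  fun z => (card_le_card (filter_subset_filter _ hB)).trans_lt (h z)

lemma SmallFibers.pos (h : SmallFibers f B d) (z : γ) : 0 < d :=
  (Nat.zero_le _).trans_lt (h z)

end SmallFibers

lemma exists_const_or_injOn [DecidableEq γ] (f : α → γ) (T : Finset α) {q : ℕ}
    (hT : (q - 1) * (q - 1) < #T) :
    ∃ Q ⊆ T, #Q = q ∧ ((∀ a ∈ Q, ∀ a' ∈ Q, f a = f a') ∨ Set.InjOn f Q) := by
  by_cases himg : q ≤ #(T.image f)
  · obtain ⟨C, hCT, hC⟩ := exists_subset_card_eq himg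
    obtain ⟨Q, hQT, hinj, hQC⟩ := exists_subset_injOn_image_eq_of_surjOn (T : Set α) C
      fun z hz => by simpa using hCT hz
    exact ⟨Q, mod_cast hQT, by rw [← hC, ← hQC, card_image_of_injOn hinj], Or.inr hinj⟩
  · obtain ⟨z, -, hz⟩ := exists_lt_card_fiber_of_mul_lt_card_of_maps_to (n := q - 1)
      (fun a ha => mem_image_of_mem f ha)
      ((Nat.mul_le_mul_right _ (by omega)).trans_lt hT)
    obtain ⟨Q, hQ, hQq⟩ := exists_subset_card_eq (show q ≤ #{a ∈ T | f a = z} by omega)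
    refine ⟨Q, hQ.trans (filter_subset _ _), hQq, Or.inl fun a ha a' ha' => ?_⟩
    rw [(mem_filter.1 (hQ ha)).2, (mem_filter.1 (hQ ha')).2]

lemma exists_shared_monochromatic_star [DecidableEq γ] (c : α → β → γ) (H : Finset α)
    (B : Finset β) {d m n : ℕ} (hH : ∀ a ∈ H, ¬ SmallFibers (c a) B d)
    (h : n * (#B).choose m < #H * d.choose m) :
    ∃ R ∈ B.powersetCard m, n < #{a ∈ H | ∀ y ∈ R, ∀ y' ∈ R, c a y = c a y'} := by
  have hrow : ∀ a ∈ H,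
      d.choose m ≤ #{R ∈ B.powersetCard m | ∀ y ∈ R, ∀ y' ∈ R, c a y = c a y'} := by
    intro a ha
    obtain ⟨z, hz⟩ := not_forall.1 (hH a ha)
    calc d.choose m ≤ #(powersetCard m {b ∈ B | c a b = z}) := by
          rw [card_powersetCard]; exact Nat.choose_le_choose m (not_lt.1 hz)
      _ ≤ _ := by
          refine card_le_card fun R hR => ?_
          simp only [mem_powersetCard, mem_filter, subset_iff] at hR ⊢
          exact ⟨⟨fun y hy => (hR.1 hy).1, hR.2⟩,
            fun y hy y' hy' => by rw [(hR.1 hy).2, (hR.1 hy').2]⟩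
  apply exists_lt_of_sum_lt
  calc ∑ _R ∈ B.powersetCard m, n = n * (#B).choose m := by simp [mul_comm]
    _ < #H * d.choose m := h
    _ ≤ ∑ a ∈ H, #{R ∈ B.powersetCard m | ∀ y ∈ R, ∀ y' ∈ R, c a y = c a y'} := by
        simpa using sum_le_sum hrow
    _ = _ := sum_card_bipartiteAbove_eq_sum_card_bipartiteBelow _

lemma exists_canonical_or_monochromatic [DecidableEq γ] (c : α → β → γ)
    (H : Finset α) (B : Finset β) {q m d : ℕ} (hm : 0 < m)
    (hH : ∀ a ∈ H, ¬ SmallFibers (c a) B d)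
    (h : (q - 1) * (q - 1) * (#B).choose m < #H * d.choose m) :
    ∃ Q ⊆ H, ∃ R ⊆ B, #Q = q ∧ #R = m ∧ (IsCanonical c Q R ∨ IsMonochromatic c Q R) := by
  obtain ⟨R, hR, hT⟩ := exists_shared_monochromatic_star c H B hH h
  rw [mem_powersetCard] at hR
  obtain ⟨b₀, hb₀⟩ : R.Nonempty := card_pos.1 (hR.2 ▸ hm)
  obtain ⟨Q, hQT, hQ, hQcolors⟩ := exists_const_or_injOn (fun a => c a b₀) _ hT
  have hrow : ∀ x ∈ Q, ∀ y ∈ R, c x y = c x b₀ := fun x hx y hy =>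
    (mem_filter.1 (hQT hx)).2 y hy b₀ hb₀
  refine ⟨Q, hQT.trans (filter_subset _ _), R, hR.1, hQ, hR.2, ?_⟩
  rcases hQcolors with hconst | hinj
  · refine Or.inr fun x hx x' hx' y hy y' hy' => ?_
    rw [hrow x hx y hy, hrow x' hx' y' hy']
    exact hconst x hx x' hx'
  · refine Or.inl ⟨fun x hx y hy y' hy' => by rw [hrow x hx y hy, hrow x hx y' hy'],
      fun x hx x' hx' y hy y' hy' hne => ?_⟩
    rw [hrow x hx y hy, hrow x' hx' y' hy']
    exact fun h => hne (hinj hx hx' h)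

section Collisions

variable [DecidableEq γ]

open Classical in
def collisions (c : α → β → γ) (Q : Finset α) (Y : Finset β) : Finset β :=
  {y ∈ Y | ¬ Set.InjOn (fun x => c x y) Q}

lemma collisions_subset (c : α → β → γ) (Q : Finset α) (Y : Finset β) :
    collisions c Q Y ⊆ Y :=
  filter_subset _ _

lemma card_collisions_insert_le [DecidableEq α] (c : α → β → γ) {Q : Finset α} {x : α}
    (hx : x ∉ Q) (Y : Finset β) :
    #(collisions c (insert x Q) Y) ≤
      #(collisions c Q Y) + ∑ x' ∈ Q, #{y ∈ Y | c x y = c x' y} := by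
  classical
  calc #(collisions c (insert x Q) Y)
      ≤ #(collisions c Q Y ∪ Q.biUnion fun x' => {y ∈ Y | c x y = c x' y}) := by
        refine card_le_card fun y hy => ?_
        simp only [collisions, mem_filter, mem_union, mem_biUnion, coe_insert,
          Set.injOn_insert (mem_coe.not.2 hx), not_and_or, not_not, Set.mem_image] at hy ⊢
        obtain ⟨hyY, hQ | ⟨x', hx', hxx'⟩⟩ := hy
        · exact Or.inl ⟨hyY, hQ⟩
        · exact Or.inr ⟨x', hx', hyY, hxx'.symm⟩
    _ ≤ _ := (card_union_le _ _).trans (Nat.add_le_add_left card_biUnion_le _)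

variable {X : Finset α} {Y : Finset β} {d : ℕ}

lemma sum_card_filter_eq_le (c : α → β → γ) (hY : ∀ y ∈ Y, SmallFibers (fun x => c x y) X d)
    (g : β → γ) : ∑ x ∈ X, #{y ∈ Y | c x y = g y} ≤ #Y * d := by
  calc ∑ x ∈ X, #{y ∈ Y | c x y = g y} = ∑ y ∈ Y, #{x ∈ X | c x y = g y} :=
        sum_card_bipartiteAbove_eq_sum_card_bipartiteBelow _
    _ ≤ ∑ _y ∈ Y, d := sum_le_sum fun y hy => (hY y hy (g y)).le
    _ = #Y * d := by rw [sum_const, smul_eq_mul]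

lemma exists_mem_sdiff_sum_card_le [DecidableEq α] (c : α → β → γ)
    (hY : ∀ y ∈ Y, SmallFibers (fun x => c x y) X d) {Q : Finset α} (hQX : Q ⊆ X)
    (hQ : #Q < #X) :
    ∃ x ∈ X \ Q, (#X - #Q) * ∑ x' ∈ Q, #{y ∈ Y | c x y = c x' y} ≤ #Q * (#Y * d) := by
  have hne : (X \ Q).Nonempty := by
    rw [← card_pos, card_sdiff_of_subset hQX]; omega
  refine exists_le_of_sum_le hne ?_
  rw [← mul_sum, sum_const, smul_eq_mul, card_sdiff_of_subset hQX, sum_comm]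
  gcongr
  calc ∑ x' ∈ Q, ∑ x ∈ X \ Q, #{y ∈ Y | c x y = c x' y}
      ≤ ∑ x' ∈ Q, ∑ x ∈ X, #{y ∈ Y | c x y = c x' y} :=
        sum_le_sum fun _ _ => sum_le_sum_of_subset sdiff_subset
    _ ≤ ∑ _x' ∈ Q, #Y * d := sum_le_sum fun x' _ => sum_card_filter_eq_le c hY (c x')
    _ = #Q * (#Y * d) := by rw [sum_const, smul_eq_mul]

lemma exists_card_collisions_le [DecidableEq α] (c : α → β → γ)
    (hY : ∀ y ∈ Y, SmallFibers (fun x => c x y) X d) {k : ℕ} (hk : k ≤ #X) :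
    ∃ Q ⊆ X, #Q = k ∧ (#X - k) * #(collisions c Q Y) ≤ k * k * (#Y * d) := by
  suffices ∀ i ≤ k, ∃ Q ⊆ X, #Q = i ∧ (#X - k) * #(collisions c Q Y) ≤ i * i * (#Y * d) from
    this k le_rfl
  intro i hi
  induction i with
  | zero => exact ⟨∅, empty_subset _, rfl, by simp [collisions]⟩
  | succ i ih =>
    obtain ⟨Q, hQX, rfl, hQ⟩ := ih (by omega)
    obtain ⟨x, hx, hxQ⟩ := exists_mem_sdiff_sum_card_le c hY hQX (by omega)
    rw [mem_sdiff] at hx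
    refine ⟨insert x Q, insert_subset hx.1 hQX, card_insert_of_notMem hx.2, ?_⟩
    calc (#X - k) * #(collisions c (insert x Q) Y)
        ≤ (#X - k) * (#(collisions c Q Y) + ∑ x' ∈ Q, #{y ∈ Y | c x y = c x' y}) :=
          Nat.mul_le_mul_left _ (card_collisions_insert_le c hx.2 Y)
      _ ≤ (#X - k) * #(collisions c Q Y) +
            (#X - #Q) * ∑ x' ∈ Q, #{y ∈ Y | c x y = c x' y} := by
          rw [mul_add]; gcongr; omega
      _ ≤ #Q * #Q * (#Y * d) + #Q * (#Y * d) := add_le_add hQ hxQ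
      _ ≤ (#Q + 1) * (#Q + 1) * (#Y * d) := by rw [← add_mul]; gcongr; nlinarith

end Collisions

lemma exists_isRainbow_insert [DecidableEq β] [DecidableEq γ] (c : α → β → γ) {Q : Finset α}
    {R G : Finset β} {d : ℕ} (hQ : Q.Nonempty) (hR : IsRainbow c Q R)
    (hrow : ∀ x ∈ Q, SmallFibers (c x) G d) (hG : ∀ y ∈ G, Set.InjOn (fun x => c x y) Q)
    (hcard : #Q * #Q * #R * d < #G) :
    ∃ y ∈ G, y ∉ R ∧ IsRainbow c Q (insert y R) := by
  set F := (Q ×ˢ Q ×ˢ R).biUnion fun p => {y ∈ G | c p.1 y = c p.2.1 p.2.2}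
  have hF : #F < #G := calc
    #F ≤ ∑ p ∈ Q ×ˢ Q ×ˢ R, #{y ∈ G | c p.1 y = c p.2.1 p.2.2} := card_biUnion_le
    _ ≤ ∑ _p ∈ Q ×ˢ Q ×ˢ R, d := sum_le_sum fun p hp => (hrow p.1 (mem_product.1 hp).1 _).le
    _ < #G := by simpa [card_product, mul_assoc] using hcard
  obtain ⟨y, hyG, hyF⟩ := exists_mem_notMem_of_card_lt_card hF
  have hnew : ∀ x ∈ Q, ∀ x' ∈ Q, ∀ y' ∈ R, c x y ≠ c x' y' := fun x hx x' hx' y' hy' h =>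
    hyF (mem_biUnion.2 ⟨(x, x', y'), by simp [hx, hx', hy'], mem_filter.2 ⟨hyG, h⟩⟩)
  obtain ⟨x₀, hx₀⟩ := hQ
  refine ⟨y, hyG, fun hyR => hnew x₀ hx₀ x₀ hx₀ y hyR rfl, ?_⟩
  intro x hx x' hx' z hz z' hz' h
  rw [mem_insert] at hz hz'
  rcases hz with rfl | hz <;> rcases hz' with rfl | hz'
  · exact ⟨hG _ hyG hx hx' h, rfl⟩
  · exact absurd h (hnew x hx x' hx' z' hz')
  · exact absurd h.symm (hnew x' hx' x hx z hz)
  · exact hR x hx x' hx' z hz z' hz' h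

lemma exists_isRainbow_of_injOn [DecidableEq β] [DecidableEq γ] (c : α → β → γ)
    {Q : Finset α} {G : Finset β} {d k : ℕ} (hQ : Q.Nonempty)
    (hrow : ∀ x ∈ Q, SmallFibers (c x) G d) (hG : ∀ y ∈ G, Set.InjOn (fun x => c x y) Q)
    (hcard : #Q * #Q * k * d < #G) :
    ∃ R ⊆ G, #R = k ∧ IsRainbow c Q R := by
  induction k with
  | zero => exact ⟨∅, empty_subset _, rfl, by simp [IsRainbow]⟩
  | succ j ih =>
    obtain ⟨R, hRG, rfl, hR⟩ := ih (lt_of_le_of_lt (by gcongr; omega) hcard)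
    obtain ⟨y, hyG, hyR, hR'⟩ := exists_isRainbow_insert c hQ hR hrow hG
      (lt_of_le_of_lt (by gcongr; omega) hcard)
    exact ⟨insert y R, insert_subset hyG hRG, card_insert_of_notMem hyR, hR'⟩

lemma exists_isRainbow_of_smallFibers [DecidableEq α] [DecidableEq β] [DecidableEq γ]
    (c : α → β → γ) {X : Finset α} {Y : Finset β} {k d₁ d₂ : ℕ} (hk : 0 < k)
    (hX : ∀ x ∈ X, SmallFibers (c x) Y d₂) (hY : ∀ y ∈ Y, SmallFibers (fun x => c x y) X d₁)
    (h₁ : 2 * (k * k * d₁) + k ≤ #X) (h₂ : 2 * (k * k * k * d₂) < #Y) :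
    ∃ X' ⊆ X, ∃ Y' ⊆ Y, #X' = k ∧ #Y' = k ∧ IsRainbow c X' Y' := by
  obtain ⟨Q, hQX, hQ, hcoll⟩ := exists_card_collisions_le c hY (k := k) (by omega)
  obtain ⟨x, hx⟩ : Q.Nonempty := card_pos.1 (hQ ▸ hk)
  obtain ⟨y, hy⟩ : Y.Nonempty := card_pos.1 (by omega)
  have hd₁ : 0 < d₁ := (hY y hy).pos (c x y)
  have hcoll₂ : 2 * #(collisions c Q Y) ≤ #Y := by
    refine Nat.le_of_mul_le_mul_left ?_ (by positivity : 0 < k * k * d₁)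
    calc k * k * d₁ * (2 * #(collisions c Q Y)) = 2 * (k * k * d₁) * #(collisions c Q Y) := by
          ring
      _ ≤ (#X - k) * #(collisions c Q Y) := by gcongr; omega
      _ ≤ k * k * (#Y * d₁) := hcoll
      _ = k * k * d₁ * #Y := by ring
  have hG : #Q * #Q * k * d₂ < #(Y \ collisions c Q Y) := by
    rw [card_sdiff_of_subset (collisions_subset c Q Y), hQ]
    omega
  obtain ⟨R, hRG, hR, hrainbow⟩ := exists_isRainbow_of_injOn c ⟨x, hx⟩
    (fun x hx => (hX x (hQX hx)).mono sdiff_subset)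
    (fun y hy => by
      obtain ⟨hyY, hy⟩ := mem_sdiff.1 hy
      simpa [collisions, hyY] using hy) hG
  exact ⟨Q, hQX, R, hRG.trans sdiff_subset, hQ, hR, hrainbow⟩

theorem exists_rainbow_or_canonical_or_monochromatic (c : α → β → γ) (X : Finset α)
    (Y : Finset β) {q m k d₁ d₂ : ℕ} (hm : 0 < m) (hk : 0 < k)
    (h₁ : 2 * ((q - 1) * (q - 1)) * (#X).choose m < #Y * d₁.choose m)
    (h₂ : 2 * ((q - 1) * (q - 1)) * (#Y).choose m < #X * d₂.choose m)
    (h₃ : 4 * (k * k * d₁) + 2 * k ≤ #X) (h₄ : 4 * (k * k * k * d₂) < #Y) :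
    (∃ X' ⊆ X, ∃ Y' ⊆ Y, #X' = k ∧ #Y' = k ∧ IsRainbow c X' Y') ∨
    (∃ Q ⊆ X, ∃ R ⊆ Y, #Q = q ∧ #R = m ∧ (IsCanonical c Q R ∨ IsMonochromatic c Q R)) ∨
    (∃ Q ⊆ Y, ∃ R ⊆ X, #Q = q ∧ #R = m ∧
      (IsCanonical (flip c) Q R ∨ IsMonochromatic (flip c) Q R)) := by
  classical
  have hsplitY :=
    card_filter_add_card_filter_not (s := Y) fun y => SmallFibers (fun x => c x y) X d₁
  by_cases hY₁ : #Y ≤ 2 * #{y ∈ Y | ¬ SmallFibers (fun x => c x y) X d₁}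
  · have := Nat.mul_le_mul_right (d₁.choose m) hY₁
    obtain ⟨Q, hQ, R, hR, hQq, hRm, h⟩ := exists_canonical_or_monochromatic (flip c)
      {y ∈ Y | ¬ SmallFibers (fun x => c x y) X d₁} X hm (fun y hy => (mem_filter.1 hy).2)
      (by linarith)
    exact Or.inr (Or.inr ⟨Q, hQ.trans (filter_subset _ _), R, hR, hQq, hRm, h⟩)
  set Y₀ := {y ∈ Y | SmallFibers (fun x => c x y) X d₁}
  have hsplitX := card_filter_add_card_filter_not (s := X) fun x => SmallFibers (c x) Y₀ d₂
  by_cases hX₁ : #X ≤ 2 * #{x ∈ X | ¬ SmallFibers (c x) Y₀ d₂}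
  · have := Nat.mul_le_mul_right (d₂.choose m) hX₁
    have : (#Y₀).choose m ≤ (#Y).choose m :=
      Nat.choose_le_choose m (card_le_card (filter_subset _ _))
    obtain ⟨Q, hQ, R, hR, hQq, hRm, h⟩ := exists_canonical_or_monochromatic c
      {x ∈ X | ¬ SmallFibers (c x) Y₀ d₂} Y₀ hm (fun x hx => (mem_filter.1 hx).2)
      (by nlinarith)
    exact Or.inr (Or.inl ⟨Q, hQ.trans (filter_subset _ _), R, hR.trans (filter_subset _ _),
      hQq, hRm, h⟩)
  set X₀ := {x ∈ X | SmallFibers (c x) Y₀ d₂}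
  obtain ⟨X', hX', Y', hY', hX'k, hY'k, h⟩ :=
    exists_isRainbow_of_smallFibers c (X := X₀) (Y := Y₀) hk (fun x hx => (mem_filter.1 hx).2)
    (fun y hy => SmallFibers.mono (mem_filter.1 hy).2 (filter_subset _ _)) (by omega) (by omega)
  exact Or.inl ⟨X', hX'.trans (filter_subset _ _), Y', hY'.trans (filter_subset _ _), hX'k,
    hY'k, h⟩

open Filter Real

lemma mul_choose_lt_mul_choose {a b n D m : ℕ} (h : a * n ^ m < b * (D + 1 - m) ^ m) :
    a * n.choose m < b * D.choose m := by
  refine Nat.lt_of_mul_lt_mul_left (a := m.factorial) ?_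
  calc m.factorial * (a * n.choose m) = a * n.descFactorial m := by
        rw [Nat.descFactorial_eq_factorial_mul_choose]; ring
    _ ≤ a * n ^ m := by gcongr; exact Nat.descFactorial_le_pow n m
    _ < b * (D + 1 - m) ^ m := h
    _ ≤ b * D.descFactorial m := by gcongr; exact Nat.pow_sub_le_descFactorial D m
    _ = m.factorial * (b * D.choose m) := by
        rw [Nat.descFactorial_eq_factorial_mul_choose]; ring

lemma two_mul_mul_choose_lt {n m C M : ℕ} {δ : ℝ} (hn : 0 < n) (hm : 2 * m ≤ (n : ℝ) ^ (1 - δ))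
    (h : 2 ^ (m + 1) * C * (n : ℝ) ^ (δ * m) < M) :
    2 * C * n.choose m < M * ⌈(n : ℝ) ^ (1 - δ)⌉₊.choose m := by
  set u := (n : ℝ) ^ (1 - δ)
  set D := ⌈u⌉₊
  have hu : 0 < u := rpow_pos_of_pos (Nat.cast_pos.2 hn) _
  have hmD : m ≤ D + 1 := by
    have : (m : ℝ) ≤ D := by linarith [Nat.le_ceil u, (Nat.cast_nonneg m : (0 : ℝ) ≤ m)]
    exact_mod_cast this.trans (by linarith : (D : ℝ) ≤ D + 1)
  have hD : u ≤ 2 * ((D + 1 - m : ℕ) : ℝ) := by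
    push_cast [hmD]
    linarith [Nat.le_ceil u]
  have hsplit : (n : ℝ) ^ m = (n : ℝ) ^ (δ * m) * u ^ m := by
    rw [← rpow_mul_natCast (Nat.cast_nonneg n), ← rpow_add (Nat.cast_pos.2 hn), ← rpow_natCast]
    ring_nf
  apply mul_choose_lt_mul_choose
  suffices (2 * C * (n : ℝ) ^ m) * 2 ^ m < (M * ((D + 1 - m : ℕ) : ℝ) ^ m) * 2 ^ m by
    exact_mod_cast lt_of_mul_lt_mul_right this (by positivity)
  calc (2 * C * (n : ℝ) ^ m) * 2 ^ m = 2 ^ (m + 1) * C * (n : ℝ) ^ (δ * m) * u ^ m := by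
        rw [hsplit]; ring
    _ < M * u ^ m := mul_lt_mul_of_pos_right h (pow_pos hu m)
    _ ≤ M * (2 * ((D + 1 - m : ℕ) : ℝ)) ^ m := by gcongr
    _ = (M * ((D + 1 - m : ℕ) : ℝ) ^ m) * 2 ^ m := by ring

lemma eventually_const_mul_rpow_le (C : ℝ) {a b : ℝ} (hab : a < b) :
    ∀ᶠ x : ℝ in atTop, C * x ^ a ≤ x ^ b := by
  filter_upwards [(tendsto_rpow_atTop (sub_pos.2 hab)).eventually_ge_atTop C,
    eventually_gt_atTop 0] with x hx hx0
  calc C * x ^ a ≤ x ^ (b - a) * x ^ a := by gcongr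
    _ = x ^ b := by rw [← rpow_add hx0, sub_add_cancel]

lemma eventually_rpow_le_div_logb {c : ℝ} (hc : 0 < c) :
    ∀ᶠ x : ℝ in atTop, x ^ (1 - c) ≤ x / logb 2 x := by
  filter_upwards [(isLittleO_log_rpow_atTop hc).bound (c := log 2) (by positivity),
    eventually_gt_atTop 1] with x hx hx1
  have hx0 : 0 < x := by linarith
  rw [norm_of_nonneg (log_nonneg hx1.le), norm_of_nonneg (rpow_nonneg hx0.le c)] at hx
  have hlogb : logb 2 x ≤ x ^ c := by
    rw [logb, div_le_iff₀ (log_pos one_lt_two)]; linarith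
  rw [rpow_sub hx0, rpow_one]
  exact div_le_div_of_nonneg_left hx0.le (logb_pos one_lt_two hx1) hlogb

lemma eventually_mul_ceil_rpow_add_lt (K : ℕ) {δ : ℝ} (hδ : 0 < δ) :
    ∀ᶠ n : ℕ in atTop, K * ⌈(n : ℝ) ^ (1 - δ)⌉₊ + K < n := by
  have hreal : ∀ᶠ x : ℝ in atTop, K * x ^ (1 - δ) + 2 * K < x := by
    filter_upwards [eventually_const_mul_rpow_le (2 * K) (by linarith : 1 - δ < 1),
      eventually_gt_atTop (4 * K : ℝ)] with x hx hxK
    rw [rpow_one] at hx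
    linarith
  filter_upwards [tendsto_natCast_atTop_atTop.eventually hreal] with n hn
  have hceil := Nat.ceil_lt_add_one (rpow_nonneg (Nat.cast_nonneg n) (1 - δ))
  have : (K : ℝ) * ⌈(n : ℝ) ^ (1 - δ)⌉₊ + K < n := by
    nlinarith [(Nat.cast_nonneg K : (0 : ℝ) ≤ K)]
  exact_mod_cast this

lemma natCast_ceil_sub_one_le {a : ℝ} (ha : 0 ≤ a) : ((⌈a⌉₊ - 1 : ℕ) : ℝ) ≤ a :=
  le_trans (by exact_mod_cast Nat.sub_le_iff_le_add.2 (Nat.ceil_le_floor_add_one a))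
    (Nat.floor_le ha)

lemma exists_threshold (l : ℕ) (hl : 0 < l) :
    ∃ s₀ : ℝ, 0 < s₀ ∧ ∀ s t : ℕ, s₀ < s → (s : ℝ) / logb 2 s < t → t ≤ s →
      2 * ((⌈(s : ℝ) ^ (1 / (18 * (l : ℝ)))⌉₊ - 1) * (⌈(s : ℝ) ^ (1 / (18 * (l : ℝ)))⌉₊ - 1)) *
          s.choose (2 * l) < t * ⌈(s : ℝ) ^ (1 - 1 / (8 * (l : ℝ)))⌉₊.choose (2 * l) ∧
      2 * ((⌈(s : ℝ) ^ (1 / (18 * (l : ℝ)))⌉₊ - 1) * (⌈(s : ℝ) ^ (1 / (18 * (l : ℝ)))⌉₊ - 1)) *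
          t.choose (2 * l) < s * ⌈(t : ℝ) ^ (1 - 1 / (8 * (l : ℝ)))⌉₊.choose (2 * l) ∧
      4 * (4 * l * (4 * l) * ⌈(s : ℝ) ^ (1 - 1 / (8 * (l : ℝ)))⌉₊) + 2 * (4 * l) ≤ s ∧
      4 * (4 * l * (4 * l) * (4 * l) * ⌈(t : ℝ) ^ (1 - 1 / (8 * (l : ℝ)))⌉₊) < t := by
  set ε : ℝ := 1 / (18 * (l : ℝ)) with hεdef
  set δ : ℝ := 1 / (8 * (l : ℝ)) with hδdef
  set m := 2 * l
  set k := 4 * l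
  have hlR : (1 : ℝ) ≤ l := by exact_mod_cast hl
  have hδ : 0 < δ := by positivity
  have hδ8 : δ ≤ 1 / 8 := by rw [hδdef]; gcongr; linarith
  -- `δ * m = 1 / 4`, so the exponents leave room for the factor `2 ^ (m + 1)`
  have hexp : 2 * ε + δ * m < 1 - δ / 2 := by
    have hε18 : ε ≤ 1 / 18 := by rw [hεdef]; gcongr; linarith
    have hδm : δ * m = 1 / 4 := by rw [hδdef]; push_cast [m]; field_simp; ring
    linarith
  obtain ⟨N, hN⟩ := eventually_atTop.1 <|
    (eventually_mul_ceil_rpow_add_lt (4 * (k * k * k)) hδ).and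
      ((tendsto_rpow_atTop (by linarith : (0 : ℝ) < 1 - δ)).comp tendsto_natCast_atTop_atTop
        |>.eventually_ge_atTop (2 * m : ℝ))
  obtain ⟨x₀, hx₀⟩ := eventually_atTop.1 <|
    ((eventually_rpow_le_div_logb (half_pos hδ)).and
      (eventually_const_mul_rpow_le (2 ^ (m + 1)) hexp)).and
      ((tendsto_rpow_atTop (by linarith : (0 : ℝ) < 1 - δ / 2)).eventually_ge_atTop (N : ℝ))
  refine ⟨max x₀ 1, by positivity, fun s t hs hst hts => ?_⟩
  obtain ⟨⟨hlog, hpow⟩, hNs⟩ := hx₀ s ((le_max_left _ _).trans_lt hs).le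
  have hs0 : (0 : ℝ) < s := by linarith [le_max_right x₀ 1]
  have ht : (s : ℝ) ^ (1 - δ / 2) < t := hlog.trans_lt hst
  have hNt : N ≤ t := by exact_mod_cast hNs.trans ht.le
  obtain ⟨hs₁, hs₂⟩ := hN s (hNt.trans hts)
  obtain ⟨ht₁, ht₂⟩ := hN t hNt
  set q := ⌈(s : ℝ) ^ ε⌉₊
  have hq : ((q - 1 : ℕ) : ℝ) ≤ (s : ℝ) ^ ε := natCast_ceil_sub_one_le (by positivity)
  have key : ∀ n : ℕ, n ≤ s →
      2 ^ (m + 1) * (((q - 1) * (q - 1) : ℕ) : ℝ) * (n : ℝ) ^ (δ * m) < t := by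
    intro n hn
    calc 2 ^ (m + 1) * (((q - 1) * (q - 1) : ℕ) : ℝ) * (n : ℝ) ^ (δ * m)
        ≤ 2 ^ (m + 1) * ((s : ℝ) ^ ε * (s : ℝ) ^ ε) * (s : ℝ) ^ (δ * m) := by
          push_cast; gcongr
      _ = 2 ^ (m + 1) * (s : ℝ) ^ (2 * ε + δ * m) := by
          rw [rpow_add hs0, two_mul, rpow_add hs0]; ring
      _ < t := hpow.trans_lt ht
  have hkk : k * k ≤ k * k * k := Nat.le_mul_of_pos_right _ (by omega)
  refine ⟨two_mul_mul_choose_lt (by exact_mod_cast hs0) hs₂ (key s le_rfl),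
    two_mul_mul_choose_lt (by omega) ht₂ ((key t hts).trans_le (by exact_mod_cast hts)),
    by nlinarith [Nat.mul_le_mul_right ⌈(s : ℝ) ^ (1 - δ)⌉₊ hkk], by nlinarith⟩

end BipartiteCanonicalRamsey

open BipartiteCanonicalRamsey in
/-- Asymmetric bipartite canonical Ramsey theorem: for every `l ≥ 2` there are
`ε > 0` (one may take `ε = 1/(18l)`) and `s₀ > 0` such that every edge-coloring of
`K_{s,t}` on parts `X`, `Y` with `s > s₀` and `s/log₂ s < t ≤ s` contains a rainbow
`K_{4l,4l}`, or a `Q`-canonical `K_{q,2l}`, or a monochromatic `K_{q,2l}`, where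
`q = ⌈s^ε⌉` (and the `K_{q,2l}` may lie either way across the bipartition). -/
theorem bipartite_canonical_ramsey (l : ℕ) (hl : 2 ≤ l) :
    ∃ ε : ℝ, 0 < ε ∧ ∃ s₀ : ℝ, 0 < s₀ ∧
      ∀ (γ : Type) (s t : ℕ) (X Y : Finset ℕ) (χ : Finset ℕ → γ),
        X.card = s → Y.card = t → Disjoint X Y →
        s₀ < (s : ℝ) → (s : ℝ) / Real.logb 2 s < (t : ℝ) → t ≤ s →
        -- (i) a rainbow colored `K_{4l,4l}`
        ((∃ X' ⊆ X, ∃ Y' ⊆ Y, X'.card = 4 * l ∧ Y'.card = 4 * l ∧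
            ∀ x ∈ X', ∀ x' ∈ X', ∀ y ∈ Y', ∀ y' ∈ Y',
              χ ({x, y} : Finset ℕ) = χ ({x', y'} : Finset ℕ) → x = x' ∧ y = y') ∨
        -- (ii) a `Q`-canonical `K_{q,2l}`
        (∃ Q R : Finset ℕ, ((Q ⊆ X ∧ R ⊆ Y) ∨ (Q ⊆ Y ∧ R ⊆ X)) ∧
            Q.card = ⌈(s : ℝ) ^ ε⌉₊ ∧ R.card = 2 * l ∧
            (∀ x ∈ Q, ∀ y ∈ R, ∀ y' ∈ R,
              χ ({x, y} : Finset ℕ) = χ ({x, y'} : Finset ℕ)) ∧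
            (∀ x ∈ Q, ∀ x' ∈ Q, ∀ y ∈ R, ∀ y' ∈ R, x ≠ x' →
              χ ({x, y} : Finset ℕ) ≠ χ ({x', y'} : Finset ℕ))) ∨
        -- (iii) a monochromatic `K_{q,2l}`
        (∃ Q R : Finset ℕ, ((Q ⊆ X ∧ R ⊆ Y) ∨ (Q ⊆ Y ∧ R ⊆ X)) ∧
            Q.card = ⌈(s : ℝ) ^ ε⌉₊ ∧ R.card = 2 * l ∧
            (∀ x ∈ Q, ∀ x' ∈ Q, ∀ y ∈ R, ∀ y' ∈ R,
              χ ({x, y} : Finset ℕ) = χ ({x', y'} : Finset ℕ)))) := by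
  obtain ⟨s₀, hs₀, hbounds⟩ := exists_threshold l (by omega)
  refine ⟨1 / (18 * l), by positivity, s₀, hs₀, fun γ s t X Y χ hX hY _ hs hst hts => ?_⟩
  obtain ⟨h₁, h₂, h₃, h₄⟩ := hbounds s t hs hst hts
  subst hX hY
  have hflip : flip (fun a b => χ {a, b}) = fun a b => χ {a, b} := by
    funext a b; exact congrArg χ (pair_comm b a)
  rcases exists_rainbow_or_canonical_or_monochromatic (fun a b => χ {a, b}) X Y
      (by omega : 0 < 2 * l) (by omega : 0 < 4 * l) h₁ h₂ h₃ h₄ with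
    h | ⟨Q, hQ, R, hR, hq, hm, h | h⟩ | ⟨Q, hQ, R, hR, hq, hm, h | h⟩
  · exact Or.inl h
  · exact Or.inr (Or.inl ⟨Q, R, Or.inl ⟨hQ, hR⟩, hq, hm, h⟩)
  · exact Or.inr (Or.inr ⟨Q, R, Or.inl ⟨hQ, hR⟩, hq, hm, h⟩)
  · rw [hflip] at h
    exact Or.inr (Or.inl ⟨Q, R, Or.inr ⟨hQ, hR⟩, hq, hm, h⟩)
  · rw [hflip] at h
    exact Or.inr (Or.inr ⟨Q, R, Or.inr ⟨hQ, hR⟩, hq, hm, h⟩)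
end

section
/- Let l ≥ 2 and let G = K_{4l,4l} be a complete bipartite graph with vertex set V(G) ⊆ [n], edge-colored so that each edge e receives a color z_e ∈ [n] \ e with all colors pairwise distinct (G is rainbow colored). Then G contains a strongly rainbow colored cycle of length 2l; consequently, the 3-uniform extension G* = {e ∪ {z_e} : e ∈ G} contains a loose 2l-cycle. -/
open Finset Function

namespace ZMod

lemma add_one_ne_self {m : ℕ} (hm : 1 < m) (i : ZMod m) : i + 1 ≠ i := by
  have : Fact (1 < m) := ⟨hm⟩
  exact add_ne_left.2 one_ne_zero

lemma add_one_add_one_ne_self {m : ℕ} (hm : 2 < m) (i : ZMod m) : i + 1 + 1 ≠ i := by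
  rw [add_assoc, one_add_one_eq_two, Ne, add_eq_left, ← Nat.cast_ofNat, natCast_eq_zero_iff]
  exact fun h => absurd (Nat.le_of_dvd two_pos h) (by omega)

end ZMod

section Cycles

variable {m : ℕ} {x : ZMod m → ℕ} {G : Finset (Finset ℕ)} {χ : Finset ℕ → ℕ}

lemma injective_cycle_edge (hm : 2 < m) (hx : Injective x) :
    Injective fun i => ({x i, x (i + 1)} : Finset ℕ) := by
  intro i j (h : ({x i, x (i + 1)} : Finset ℕ) = {x j, x (j + 1)})
  rw [← coe_inj, coe_pair, coe_pair, Set.pair_eq_pair_iff, hx.eq_iff, hx.eq_iff, hx.eq_iff,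
    hx.eq_iff] at h
  rcases h with ⟨rfl, -⟩ | ⟨rfl, h⟩
  · rfl
  · exact absurd h (ZMod.add_one_add_one_ne_self hm j)

lemma eq_or_adjacent_of_mem_inter {c : ZMod m → ℕ} (hx : Injective x) (hc : Injective c)
    (hcx : ∀ i j, c i ≠ x j) {i j : ZMod m} {t : ℕ}
    (h : t ∈ insert (c i) ({x i, x (i + 1)} : Finset ℕ) ∩ insert (c j) {x j, x (j + 1)}) :
    i = j ∨ (j = i + 1 ∧ t = x (i + 1)) ∨ (i = j + 1 ∧ t = x i) := by
  simp only [mem_inter, mem_insert, mem_singleton] at h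
  grind [hx.eq_iff, hc.eq_iff]

theorem HasStronglyRainbowCycle.hasLooseCycle (hm : 2 < m) (h : HasStronglyRainbowCycle m G χ) :
    HasLooseCycle m (Extension G χ) := by
  obtain ⟨x, hx, hxG, hc, hcx⟩ := h
  refine ⟨fun i => insert (χ {x i, x (i + 1)}) {x i, x (i + 1)}, fun i => x (i + 1),
    fun i j hij => ?_, fun i j hij => add_right_cancel (hx hij),
    fun i => mem_image_of_mem _ (hxG i), fun i => ?_, fun i j hji hji' hij' => ?_⟩
  · beta_reduce at hij
    have hi : χ {x i, x (i + 1)} ∈ insert (χ {x i, x (i + 1)}) ({x i, x (i + 1)} : Finset ℕ) ∩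
        insert (χ {x j, x (j + 1)}) {x j, x (j + 1)} := by
      rw [← hij, inter_self]
      exact mem_insert_self _ _
    rcases eq_or_adjacent_of_mem_inter hx hc hcx hi with h | ⟨-, h⟩ | ⟨-, h⟩
    exacts [h, absurd h (hcx _ _), absurd h (hcx _ _)]
  · ext t
    refine ⟨fun ht => ?_, fun ht => ?_⟩
    · rcases eq_or_adjacent_of_mem_inter hx hc hcx ht with h | ⟨-, rfl⟩ | ⟨h, -⟩
      exacts [absurd h.symm (ZMod.add_one_ne_self (by omega) i), mem_singleton_self _,
        absurd h.symm (ZMod.add_one_add_one_ne_self hm i)]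
    · rw [mem_singleton.1 ht]
      simp
  · refine eq_empty_of_forall_notMem fun t ht => ?_
    rcases eq_or_adjacent_of_mem_inter hx hc hcx ht with h | ⟨h, -⟩ | ⟨h, -⟩
    exacts [hji h.symm, hji' h, hij' h]

lemma hasStronglyRainbowCycle_of_injOn (hm : 2 < m) (hχ : Set.InjOn χ G) (hx : Injective x)
    (hxG : ∀ i, ({x i, x (i + 1)} : Finset ℕ) ∈ G) (hcx : ∀ i j, χ {x i, x (i + 1)} ≠ x j) :
    HasStronglyRainbowCycle m G χ :=
  ⟨x, hx, hxG, fun i j h => injective_cycle_edge hm hx (hχ (hxG i) (hxG j) h), hcx⟩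

end Cycles

section CompleteBipartite

variable {A B C : Finset ℕ} {e : Finset ℕ}

lemma mem_completeBipartiteEdges :
    e ∈ completeBipartiteEdges A B ↔ ∃ a ∈ A, ∃ b ∈ B, e = {a, b} := by
  simp [completeBipartiteEdges, eq_comm, and_assoc]

lemma pair_mem_completeBipartiteEdges_s18 {a b : ℕ} (ha : a ∈ A) (hb : b ∈ B) :
    {a, b} ∈ completeBipartiteEdges A B :=
  mem_completeBipartiteEdges.2 ⟨a, ha, b, hb, rfl⟩

lemma completeBipartiteEdges_comm : completeBipartiteEdges A B = completeBipartiteEdges B A := by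
  ext e
  simp only [mem_completeBipartiteEdges]
  exact ⟨fun ⟨a, ha, b, hb, he⟩ => ⟨b, hb, a, ha, he.trans (pair_comm a b)⟩,
    fun ⟨b, hb, a, ha, he⟩ => ⟨a, ha, b, hb, he.trans (pair_comm b a)⟩⟩

lemma completeBipartiteEdges_mono {A' B' : Finset ℕ} (hA : A' ⊆ A) (hB : B' ⊆ B) :
    completeBipartiteEdges A' B' ⊆ completeBipartiteEdges A B :=
  image_subset_image (product_subset_product hA hB)

lemma subset_union_of_mem_completeBipartiteEdges (he : e ∈ completeBipartiteEdges A B) :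
    e ⊆ A ∪ B := by
  obtain ⟨a, ha, b, hb, rfl⟩ := mem_completeBipartiteEdges.1 he
  exact insert_subset (mem_union_left _ ha) (singleton_subset_iff.2 (mem_union_right _ hb))

lemma card_inter_le_one_of_mem_completeBipartiteEdges (hAB : Disjoint A B) (hC : C ⊆ B)
    (he : e ∈ completeBipartiteEdges A B) : #(e ∩ C) ≤ 1 := by
  obtain ⟨a, ha, b, -, rfl⟩ := mem_completeBipartiteEdges.1 he
  rw [insert_inter_of_notMem fun haC => disjoint_left.1 hAB ha (hC haC)]
  exact (card_le_card inter_subset_left).trans (card_singleton b).le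

end CompleteBipartite

lemma exists_subset_avoiding_colors {G : Finset (Finset ℕ)} {χ : Finset ℕ → ℕ} {B S : Finset ℕ}
    {k : ℕ} (hχ : Set.InjOn χ G) (hGB : ∀ e ∈ G, #(e ∩ B) ≤ 1) (hk : k + #S ≤ #B) :
    ∃ B' ⊆ B, #B' = k ∧ ∀ e ∈ G, χ e ∈ S → Disjoint e B' := by
  set T := {e ∈ G | χ e ∈ S}.biUnion (· ∩ B)
  have hT : #T ≤ #S := calc
    #T ≤ #{e ∈ G | χ e ∈ S} * 1 :=
      card_biUnion_le_card_mul _ _ _ fun e he => hGB e (mem_filter.1 he).1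
    _ ≤ #S := by
      rw [mul_one]
      exact card_le_card_of_injOn χ (fun e he => (mem_filter.1 he).2) (hχ.mono (filter_subset ..))
  obtain ⟨B', hB', rfl⟩ := exists_subset_card_eq (s := B \ T) (n := k)
    (by have := card_le_card_sdiff_add_card (s := B) (t := T); omega)
  refine ⟨B', hB'.trans sdiff_subset, rfl, fun e he heS => disjoint_right.2 fun b hb hbe => ?_⟩
  obtain ⟨hbB, hbT⟩ := mem_sdiff.1 (hB' hb)
  exact hbT (mem_biUnion.2 ⟨e, mem_filter.2 ⟨he, heS⟩, mem_inter.2 ⟨hbe, hbB⟩⟩)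

lemma exists_parts_avoiding_colors {A B : Finset ℕ} {χ : Finset ℕ → ℕ} {l : ℕ}
    (hAB : Disjoint A B) (hA : 2 * l ≤ #A) (hB : 3 * l ≤ #B)
    (hχ : Set.InjOn χ (completeBipartiteEdges A B)) :
    ∃ A' ⊆ A, ∃ B' ⊆ B, #A' = l ∧ #B' = l ∧ ∀ e ∈ completeBipartiteEdges A' B', χ e ∉ A' ∪ B' := by
  obtain ⟨A₁, hA₁, hA₁c⟩ := exists_subset_card_eq hA
  obtain ⟨B', hB', hB'c, hB'avoid⟩ := exists_subset_avoiding_colors (S := A₁) (k := l) hχ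
    (fun e he => card_inter_le_one_of_mem_completeBipartiteEdges hAB subset_rfl he) (by omega)
  obtain ⟨A', hA', hA'c, hA'avoid⟩ := exists_subset_avoiding_colors (B := A₁) (S := B') (k := l) hχ
    (fun e he => card_inter_le_one_of_mem_completeBipartiteEdges hAB.symm hA₁
      (completeBipartiteEdges_comm ▸ he)) (by omega)
  refine ⟨A', hA'.trans hA₁, B', hB', hA'c, hB'c, fun e he hce => ?_⟩
  have heG := completeBipartiteEdges_mono (hA'.trans hA₁) hB' he
  obtain ⟨a, ha, b, hb, rfl⟩ := mem_completeBipartiteEdges.1 he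
  rcases mem_union.1 hce with h | h
  · exact disjoint_left.1 (hB'avoid _ heG (hA' h)) (by simp) hb
  · exact disjoint_left.1 (hA'avoid _ heG h) (by simp) ha

lemma exists_alternating_cycle {A B : Finset ℕ} {l : ℕ} (hl : 0 < l) (hAB : Disjoint A B)
    (hA : #A = l) (hB : #B = l) :
    ∃ x : ZMod (2 * l) → ℕ, Injective x ∧
      ∀ i, ({x i, x (i + 1)} : Finset ℕ) ∈ completeBipartiteEdges A B := by
  have : NeZero (2 * l) := ⟨by omega⟩
  let parity : ZMod (2 * l) →+* ZMod 2 := ZMod.castHom (dvd_mul_right 2 l) _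
  have hparity (i : ZMod (2 * l)) : parity i = 0 ↔ i.val % 2 = 0 := by
    rw [ZMod.castHom_apply, ZMod.cast_eq_val, ZMod.natCast_eq_zero_iff, Nat.dvd_iff_mod_eq_zero]
  have hsucc (i : ZMod (2 * l)) : parity (i + 1) = 0 ↔ parity i ≠ 0 := by
    rw [map_add, map_one]
    generalize parity i = p
    decide +revert
  have hhalf (i : ZMod (2 * l)) : i.val / 2 < l := by
    have := i.val_lt
    omega
  let x (i : ZMod (2 * l)) : ℕ := if parity i = 0 then A.orderEmbOfFin hA ⟨i.val / 2, hhalf i⟩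
    else B.orderEmbOfFin hB ⟨i.val / 2, hhalf i⟩
  have hxA {i} (hi : parity i = 0) : x i ∈ A := by
    simp only [x, if_pos hi]
    exact orderEmbOfFin_mem ..
  have hxB {i} (hi : parity i ≠ 0) : x i ∈ B := by
    simp only [x, if_neg hi]
    exact orderEmbOfFin_mem ..
  refine ⟨x, fun i j hij => ZMod.val_injective _ ?_, fun i => ?_⟩
  · have hpar : parity i = 0 ↔ parity j = 0 := by
      constructor <;> intro h <;> by_contra h'
      · exact disjoint_left.1 hAB (hxA h) (hij ▸ hxB h')
      · exact disjoint_left.1 hAB (hxA h) (hij ▸ hxB h')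
    have hhalf_eq : i.val / 2 = j.val / 2 := by
      by_cases hi : parity i = 0
      · simpa [x, hi, hpar.1 hi] using hij
      · simpa [x, hi, mt hpar.2 hi] using hij
    rw [hparity, hparity] at hpar
    omega
  · by_cases hi : parity i = 0
    · exact pair_mem_completeBipartiteEdges_s18 (hxA hi) (hxB ((hsucc i).not.2 (not_not.2 hi)))
    · rw [pair_comm]
      exact pair_mem_completeBipartiteEdges_s18 (hxA ((hsucc i).2 hi)) (hxB hi)

theorem rainbow_K4l4l_yields_loose_cycle_general (l : ℕ) (hl : 2 ≤ l)
    (A B : Finset ℕ) (hAB : Disjoint A B) (hAc : A.card = 4 * l) (hBc : B.card = 4 * l)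
    (G : Finset (Finset ℕ)) (hG : G = completeBipartiteEdges A B)
    (χ : Finset ℕ → ℕ) (hrainbow : ∀ e ∈ G, ∀ f ∈ G, χ e = χ f → e = f) :
    HasStronglyRainbowCycle (2 * l) G χ ∧ HasLooseCycle (2 * l) (Extension G χ) := by
  subst hG
  obtain ⟨A', hA', B', hB', hA'c, hB'c, havoid⟩ :=
    exists_parts_avoiding_colors (l := l) hAB (by omega) (by omega) hrainbow
  obtain ⟨x, hx, hxE⟩ := exists_alternating_cycle (by omega) (hAB.mono hA' hB') hA'c hB'c
  have hcycle : HasStronglyRainbowCycle (2 * l) (completeBipartiteEdges A B) χ := by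
    refine hasStronglyRainbowCycle_of_injOn (by omega) hrainbow hx
      (fun i => completeBipartiteEdges_mono hA' hB' (hxE i)) fun i j hij => havoid _ (hxE i) ?_
    rw [hij]
    exact subset_union_of_mem_completeBipartiteEdges (hxE j) (mem_insert_self _ _)
  exact ⟨hcycle, hcycle.hasLooseCycle (by omega)⟩

/-- A rainbow colored `K_{4l,4l}` with vertices in `[n]` contains a strongly rainbow
colored cycle of length `2l`; consequently its extension contains a loose `2l`-cycle. -/
theorem rainbow_K4l4l_yields_loose_cycle (l n : ℕ) (hl : 2 ≤ l)
    (A B : Finset ℕ) (hA : A ⊆ Finset.Icc 1 n) (hB : B ⊆ Finset.Icc 1 n)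
    (hAB : Disjoint A B) (hAc : A.card = 4 * l) (hBc : B.card = 4 * l)
    (G : Finset (Finset ℕ)) (hG : G = completeBipartiteEdges A B)
    (χ : Finset ℕ → ℕ) (hχ : ∀ e ∈ G, χ e ∈ Finset.Icc 1 n ∧ χ e ∉ e)
    (hrainbow : ∀ e ∈ G, ∀ f ∈ G, χ e = χ f → e = f) :
    HasStronglyRainbowCycle (2 * l) G χ ∧ HasLooseCycle (2 * l) (Extension G χ) :=
  rainbow_K4l4l_yields_loose_cycle_general l hl A B hAB hAc hBc G hG χ hrainbow
end
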